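/- arXiv:1807.08441 — 6 statements merged into one kernel-verified Lean document; each statement's English description precedes it below -/
import Mathlib

section
/- If G is a directed strongly regular graph with parameters (n,k,μ,λ,t), then its complement G' is a directed strongly regular graph with parameters (n, k', μ', λ', t') where k' = (n−2k)+(k−1), λ' = (n−2k)+(μ−2), t' = (n−2k)+(t−1), and μ' = (n−2k)+λ. -/
open scoped Classical

noncomputable def adjMat {V : Type*} [Fintype V] (r : V → V → Prop) : Matrix V V ℤ :=
  Matrix.of fun i j => if r i j then 1 else 0

noncomputable def allOnes (V : Type*) [Fintype V] : Matrix V V ℤ :=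
  Matrix.of fun _ _ => 1

/-- `r` is (the adjacency relation of) a directed strongly regular graph with
parameters `(n, k, μ, lam, t)`. -/
def IsDSRG {V : Type*} [Fintype V] [DecidableEq V] (r : V → V → Prop)
    (n k μ lam t : ℤ) : Prop :=
  (∀ i, ¬ r i i) ∧ ((Fintype.card V : ℤ) = n) ∧
  allOnes V * adjMat r = k • allOnes V ∧
  adjMat r * allOnes V = k • allOnes V ∧
  adjMat r * adjMat r =
    t • (1 : Matrix V V ℤ) + lam • adjMat r + μ • (allOnes V - 1 - adjMat r)

/-- The Cayley digraph relation of `S ⊆ G`: `g → h` iff `g⁻¹ * h ∈ S`. -/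
def cayleyRel {G : Type*} [Group G] (S : Finset G) : G → G → Prop :=
  fun g h => g⁻¹ * h ∈ S

section
variable {V : Type*} [Fintype V]

lemma allOnes_mul_allOnes : allOnes V * allOnes V = (Fintype.card V : ℤ) • allOnes V := by
  ext i j; simp [allOnes, Matrix.mul_apply, Finset.card_univ]

lemma adj_compl [DecidableEq V] (r : V → V → Prop) (hirr : ∀ i, ¬ r i i) :
    adjMat (fun i j => i ≠ j ∧ ¬ r i j) = allOnes V - 1 - adjMat r := by
  ext i j
  by_cases hij : i = j
  · subst hij; simp [adjMat, allOnes, hirr i, Matrix.one_apply]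
  · by_cases hr : r i j <;> simp [adjMat, allOnes, hij, hr, Matrix.one_apply]

end

/-- the complement of a DSRG with parameters `(n,k,μ,λ,t)` is a DSRG with
parameters `(n, k', μ', λ', t')` where `k' = (n−2k)+(k−1)`, `λ' = (n−2k)+(μ−2)`,
`t' = (n−2k)+(t−1)` and `μ' = (n−2k)+λ`. -/
theorem dsrg_complement {V : Type*} [Fintype V] [DecidableEq V]
    (r : V → V → Prop) (n k μ lam t : ℤ)
    (h : IsDSRG r n k μ lam t) :
    IsDSRG (fun i j => i ≠ j ∧ ¬ r i j) n
      ((n - 2 * k) + (k - 1))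
      ((n - 2 * k) + lam)
      ((n - 2 * k) + (μ - 2))
      ((n - 2 * k) + (t - 1)) := by
  obtain ⟨hirr, hn, hJA, hAJ, hA2⟩ := h
  have hB := adj_compl r hirr
  refine ⟨by simp, hn, ?_, ?_, ?_⟩ <;>
    rw [hB] <;>
    simp only [mul_sub, sub_mul, mul_one, one_mul, allOnes_mul_allOnes, hn, hJA, hAJ, hA2] <;>
    module
end

section
/- Let c = 2^{ν(c)}·c₁ be an even positive integer with c₁ odd, and let n be a positive integer such that c | 2n and c₁ | n. Let U be a multisubset of C_n = ⟨x⟩ with all multiplicities at most 2. If χ(Ū) ≡ 0 (mod c) for all nonprincipal characters χ of C_n, then there exists a multisubset E of {0,1,...,2n/c − 1} with multiplicities at most 2 such that U = x^E·⟨x^{2n/c}⟩. -/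
/-!
Let `f i` be the multiplicity of `x ^ i` in `U` and `P = ∑_{i<n} f i X ^ i`, so that `χ(Ū) = P(θ)`
for the character `x ↦ θ`. Fix a prime `p ∣ c / 2`, let `ζ` have order `N` (`N = n` at the start;
`n` shrinks in the induction below) and write `n = p ^ (a + 1) u`, `N = p ^ (a + 1 + j) w` with
`p ∤ u w`. A root `r` of `X ^ u - 1` over `𝔽̄_p` can be written `r = ξ ^ (p ^ j t)` with `ξ` a
primitive `w`-th root of unity and `p ∤ t`; then `θ = ζ ^ (p ^ j t)` satisfies
`θ ^ n = 1 ≠ θ ^ (n / p)`, and `p ∣ P(θ)` in `ℤ[ζ]` gives `Φ_N ∣ P(X ^ (p ^ j t))` mod `p`. As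
`Φ_N = Φ_w ^ φ(p ^ (a + 1 + j))` in characteristic `p`, comparing multiplicities at `ξ` shows that
`r` is a root of `P` mod `p` of multiplicity at least `φ(p ^ (a + 1))`. Hence
`X ^ n - 1 = (X ^ u - 1) ^ p ^ (a + 1)` divides `(X ^ (n / p) - 1) P` mod `p`, that is,
`f (i + n / p) ≡ f i` mod `p`; for `p = 2`, applying this to `(f i - f (i + n / 2)) / 2` gives the
congruence mod `4`. Since `0 ≤ f ≤ 2`, `f` is `n / p`-periodic, so `Ū` is `p` times an element of
`ℤ[C_(n / p)]` satisfying the hypothesis with `c / 2` replaced by `c / (2p)`. Induction on `c / 2`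
makes `f` periodic with period `2n / c`, which is the coset decomposition.
-/

open Polynomial Function Finset

section RootMultiplicity

variable {K : Type*} [Field K]

lemma rootMultiplicity_X_pow_sub_C_eq_one {t : ℕ} (ht : (t : K) ≠ 0) {ξ : K} (hξ : ξ ≠ 0) :
    rootMultiplicity ξ (X ^ t - C (ξ ^ t)) = 1 := by
  have hsep := separable_X_pow_sub_C (ξ ^ t) ht (pow_ne_zero t hξ)
  refine le_antisymm (rootMultiplicity_le_one_of_separable hsep ξ) ?_
  rw [le_rootMultiplicity_iff hsep.ne_zero, pow_one, dvd_iff_isRoot]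
  simp

lemma rootMultiplicity_expand_of_ne_zero {t : ℕ} (ht : (t : K) ≠ 0) {ξ : K} (hξ : ξ ≠ 0)
    (P : K[X]) : rootMultiplicity ξ (expand K t P) = rootMultiplicity (ξ ^ t) P := by
  classical
  obtain rfl | hP := eq_or_ne P 0
  · simp
  have ht0 : 0 < t := Nat.pos_of_ne_zero (by rintro rfl; simp at ht)
  obtain ⟨g, hg, hndvd⟩ := P.exists_eq_pow_rootMultiplicity_mul_and_not_dvd hP (ξ ^ t)
  have hroot : ¬ (expand K t g).IsRoot ξ := by
    rwa [IsRoot, expand_eval, ← IsRoot, ← dvd_iff_isRoot]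
  have hexpand :
      expand K t P = (X ^ t - C (ξ ^ t)) ^ rootMultiplicity (ξ ^ t) P * expand K t g := by
    conv_lhs => rw [hg, map_mul, map_pow, map_sub, expand_X, expand_C]
  have hne : expand K t P ≠ 0 := (expand_ne_zero ht0).mpr hP
  rw [hexpand] at hne ⊢
  rw [rootMultiplicity_mul hne, ← count_roots,
    roots_pow, Multiset.count_nsmul, count_roots, rootMultiplicity_X_pow_sub_C_eq_one ht hξ,
    rootMultiplicity_eq_zero hroot, mul_one, add_zero]

lemma rootMultiplicity_expand_pow_mul {p : ℕ} [ExpChar K p] {t : ℕ} (ht : (t : K) ≠ 0) {ξ : K}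
    (hξ : ξ ≠ 0) (j : ℕ) (P : K[X]) :
    rootMultiplicity ξ (expand K (p ^ j * t) P) = p ^ j * rootMultiplicity (ξ ^ (p ^ j * t)) P := by
  rw [expand_mul, rootMultiplicity_expand_pow,
    rootMultiplicity_expand_of_ne_zero ht (pow_ne_zero _ hξ), ← pow_mul]

end RootMultiplicity

def AdjoinDvd (ζ : ℂ) (d : ℕ) (z : ℂ) : Prop :=
  ∃ y ∈ Algebra.adjoin ℤ ({ζ} : Set ℂ), z = d * y

namespace AdjoinDvd

variable {ζ z : ℂ} {a d : ℕ}

lemma of_dvd {e : ℕ} (hde : d ∣ e) (h : AdjoinDvd ζ e z) : AdjoinDvd ζ d z := by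
  obtain ⟨y, hy, rfl⟩ := h
  obtain ⟨k, rfl⟩ := hde
  refine ⟨k * y, Subalgebra.mul_mem _ (Subalgebra.natCast_mem _ k) hy, ?_⟩
  push_cast
  ring

lemma of_mul_mul (ha : a ≠ 0) (h : AdjoinDvd ζ (a * d) (a * z)) : AdjoinDvd ζ d z := by
  obtain ⟨y, hy, hz⟩ := h
  refine ⟨y, hy, mul_left_cancel₀ (Nat.cast_ne_zero.mpr ha) ?_⟩
  rw [hz]
  push_cast
  ring

end AdjoinDvd

lemma cyclotomic_dvd_expand_map_of_adjoinDvd {R : Type*} [CommRing R] {p : ℕ} [CharP R p]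
    {N : ℕ} (hN : 0 < N) {ζ : ℂ} (hζ : IsPrimitiveRoot ζ N) {P : ℤ[X]} {k : ℕ}
    (h : AdjoinDvd ζ p (aeval (ζ ^ k) P)) :
    cyclotomic N R ∣ expand R k (P.map (Int.castRingHom R)) := by
  obtain ⟨y, hy, hPy⟩ := h
  rw [Algebra.adjoin_singleton_eq_range_aeval] at hy
  obtain ⟨G, rfl⟩ := hy
  have hroot : aeval ζ (expand ℤ k P - C (p : ℤ) * G) = 0 := by
    rw [map_sub, expand_aeval, map_mul, aeval_C, hPy]
    simp
  have hdvd : cyclotomic N ℤ ∣ expand ℤ k P - C (p : ℤ) * G := by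
    rw [cyclotomic_eq_minpoly hζ hN]
    exact minpoly.isIntegrallyClosed_dvd (hζ.isIntegral hN) hroot
  simpa [map_expand] using map_dvd (mapRingHom (Int.castRingHom R)) hdvd

lemma IsPrimitiveRoot.exists_pow_eq_of_not_dvd {K : Type*} [CommRing K] [IsDomain K] {ξ r : K}
    {p w : ℕ} (hξ : IsPrimitiveRoot ξ w) (hpw : ¬ p ∣ w) (hr : r ^ w = 1) :
    ∃ t, ξ ^ t = r ∧ ¬ p ∣ t := by
  have : NeZero w := ⟨by rintro rfl; exact hpw (dvd_zero p)⟩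
  obtain ⟨i, -, rfl⟩ := hξ.eq_pow_of_pow_eq_one hr
  by_cases hpi : p ∣ i
  · exact ⟨i + w, by rw [pow_add, hξ.pow_eq_one, mul_one],
      fun h => hpw ((Nat.dvd_add_right hpi).mp h)⟩
  · exact ⟨i, rfl, hpi⟩

lemma pow_eq_one_and_pow_ne_one_of_not_dvd {p : ℕ} (hp : p.Prime) {a j t u w : ℕ} {ζ : ℂ}
    (hζ : IsPrimitiveRoot ζ (p ^ (a + 1 + j) * w)) (htu : w ∣ t * u) (hptu : ¬ p ∣ t * u) :
    (ζ ^ (p ^ j * t)) ^ (p ^ (a + 1) * u) = 1 ∧ (ζ ^ (p ^ j * t)) ^ (p ^ a * u) ≠ 1 := by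
  simp only [← pow_mul, hζ.pow_eq_one_iff_dvd]
  obtain ⟨c, hc⟩ := htu
  refine ⟨⟨c, ?_⟩, fun h => hptu ?_⟩
  · calc p ^ j * t * (p ^ (a + 1) * u) = p ^ (a + 1 + j) * (t * u) := by ring
      _ = p ^ (a + 1 + j) * (w * c) := by rw [hc]
      _ = _ := by ring
  · rw [hζ.pow_eq_one_iff_dvd] at h
    refine (Nat.mul_dvd_mul_iff_left (pow_pos hp.pos (a + j))).mp ?_
    calc p ^ (a + j) * p ∣ p ^ (a + 1 + j) * w := ⟨w, by ring⟩
      _ ∣ p ^ j * t * (p ^ a * u) := h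
      _ = p ^ (a + j) * (t * u) := by ring

lemma X_sub_C_pow_dvd_of_cyclotomic_dvd_expand {K : Type*} [Field K] {p : ℕ} [Fact p.Prime]
    [CharP K p] {a j t w : ℕ} (hpw : ¬ p ∣ w) (hpt : ¬ p ∣ t) {ξ : K} (hξ : IsPrimitiveRoot ξ w)
    {Q : K[X]} (h : cyclotomic (p ^ (a + 1 + j) * w) K ∣ expand K (p ^ j * t) Q) :
    (X - C (ξ ^ (p ^ j * t))) ^ (p ^ (a + 1) - p ^ a) ∣ Q := by
  obtain rfl | hQ := eq_or_ne Q 0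
  · exact dvd_zero _
  have hp : p.Prime := Fact.out
  have : NeZero (w : K) := ⟨fun h => hpw ((CharP.cast_eq_zero_iff K p w).mp h)⟩
  have hξ0 : ξ ≠ 0 := hξ.ne_zero (by rintro rfl; exact hpw (dvd_zero p))
  have ht : (t : K) ≠ 0 := fun h => hpt ((CharP.cast_eq_zero_iff K p t).mp h)
  have ht0 : 0 < p ^ j * t :=
    Nat.mul_pos (pow_pos hp.pos j) (Nat.pos_of_ne_zero (by rintro rfl; exact hpt (dvd_zero p)))
  have hroot : X - C ξ ∣ cyclotomic w K := dvd_iff_isRoot.mpr (isRoot_cyclotomic_iff.mpr hξ)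
  rw [cyclotomic_mul_prime_pow_eq K hpw (by omega)] at h
  have hle := (le_rootMultiplicity_iff ((expand_ne_zero ht0).mpr hQ)).mpr
    ((pow_dvd_pow_of_dvd hroot _).trans h)
  have hexp : p ^ (a + 1 + j) - p ^ (a + 1 + j - 1) = p ^ j * (p ^ (a + 1) - p ^ a) := by
    rw [Nat.mul_sub, ← pow_add, ← pow_add]
    congr 2 <;> omega
  rw [rootMultiplicity_expand_pow_mul ht hξ0, hexp] at hle
  exact (le_rootMultiplicity_iff hQ).mp (Nat.le_of_mul_le_mul_left hle (pow_pos hp.pos j))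

section Core

variable {p : ℕ} [Fact p.Prime] {a j u w : ℕ} {ζ : ℂ} {P : ℤ[X]}

lemma X_sub_C_pow_dvd_map_of_adjoinDvd {K : Type*} [Field K] [IsAlgClosed K] [CharP K p]
    (hpu : ¬ p ∣ u) (hpw : ¬ p ∣ w) (huw : u ∣ w) (hζ : IsPrimitiveRoot ζ (p ^ (a + 1 + j) * w))
    (hP : ∀ θ : ℂ, θ ^ (p ^ (a + 1) * u) = 1 → θ ^ (p ^ a * u) ≠ 1 → AdjoinDvd ζ p (aeval θ P))
    {r : K} (hr : r ^ u = 1) :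
    (X - C r) ^ (p ^ (a + 1) - p ^ a) ∣ P.map (Int.castRingHom K) := by
  have hp : p.Prime := Fact.out
  have : NeZero (w : K) := ⟨fun h => hpw ((CharP.cast_eq_zero_iff K p w).mp h)⟩
  obtain ⟨ξ, hξ⟩ := HasEnoughRootsOfUnity.exists_primitiveRoot K w
  have hξ' : IsPrimitiveRoot (ξ ^ p ^ j) w :=
    hξ.pow_of_coprime _ (((Nat.Prime.coprime_iff_not_dvd hp).2 hpw).pow_left j)
  obtain ⟨t, hrt, hpt⟩ := hξ'.exists_pow_eq_of_not_dvd (r := r) hpw (by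
    obtain ⟨v, hv⟩ := huw
    rw [hv, pow_mul, hr, one_pow])
  have htu : w ∣ t * u := (hξ'.pow_eq_one_iff_dvd _).mp (by rw [pow_mul, hrt, hr])
  have hptu : ¬ p ∣ t * u := fun h => (hp.dvd_mul.mp h).elim hpt hpu
  obtain ⟨hθ, hθ'⟩ := pow_eq_one_and_pow_ne_one_of_not_dvd hp hζ htu hptu
  have hN : 0 < p ^ (a + 1 + j) * w :=
    Nat.mul_pos (pow_pos hp.pos _) (Nat.pos_of_ne_zero (by rintro rfl; exact hpw (dvd_zero p)))
  have h := X_sub_C_pow_dvd_of_cyclotomic_dvd_expand hpw hpt hξ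
    (cyclotomic_dvd_expand_map_of_adjoinDvd (R := K) hN hζ (hP _ hθ hθ'))
  rwa [pow_mul, hrt] at h

lemma X_pow_sub_one_pow_dvd_map_of_adjoinDvd
    (hpu : ¬ p ∣ u) (hpw : ¬ p ∣ w) (huw : u ∣ w) (hζ : IsPrimitiveRoot ζ (p ^ (a + 1 + j) * w))
    (hP : ∀ θ : ℂ, θ ^ (p ^ (a + 1) * u) = 1 → θ ^ (p ^ a * u) ≠ 1 → AdjoinDvd ζ p (aeval θ P)) :
    ((X : (ZMod p)[X]) ^ u - 1) ^ (p ^ (a + 1) - p ^ a) ∣ P.map (Int.castRingHom (ZMod p)) := by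
  let K := AlgebraicClosure (ZMod p)
  have hu0 : 0 < u := Nat.pos_of_ne_zero (by rintro rfl; exact hpu (dvd_zero p))
  have : NeZero (u : K) := ⟨fun h => hpu ((CharP.cast_eq_zero_iff K p u).mp h)⟩
  obtain ⟨μ, hμ⟩ := HasEnoughRootsOfUnity.exists_primitiveRoot K u
  have hmonic : ((X : (ZMod p)[X]) ^ u - 1).Monic := by
    simpa using monic_X_pow_sub_C (1 : ZMod p) hu0.ne'
  rw [← map_dvd_map (algebraMap (ZMod p) K) (algebraMap (ZMod p) K).injective (hmonic.pow _),
    Polynomial.map_map, RingHom.ext_int ((algebraMap (ZMod p) K).comp _) (Int.castRingHom K)]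
  simp only [Polynomial.map_pow, Polynomial.map_sub, Polynomial.map_X, Polynomial.map_one,
    X_pow_sub_one_eq_prod hu0 hμ, ← Finset.prod_pow]
  refine Finset.prod_dvd_of_coprime (fun r _ s _ hrs => ?_) fun r hr =>
    X_sub_C_pow_dvd_map_of_adjoinDvd hpu hpw huw hζ hP ((mem_nthRootsFinset hu0 1).mp hr)
  exact (pairwise_coprime_X_sub_C Function.injective_id hrs).pow

lemma X_pow_sub_one_dvd_mul_map_of_adjoinDvd
    (hpu : ¬ p ∣ u) (hpw : ¬ p ∣ w) (huw : u ∣ w) (hζ : IsPrimitiveRoot ζ (p ^ (a + 1 + j) * w))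
    (hP : ∀ θ : ℂ, θ ^ (p ^ (a + 1) * u) = 1 → θ ^ (p ^ a * u) ≠ 1 → AdjoinDvd ζ p (aeval θ P)) :
    (X : (ZMod p)[X]) ^ (p ^ (a + 1) * u) - 1 ∣
      (X ^ (p ^ a * u) - 1) * P.map (Int.castRingHom (ZMod p)) := by
  have hp : p.Prime := Fact.out
  have hfrob : ∀ e, (X : (ZMod p)[X]) ^ (p ^ e * u) - 1 = (X ^ u - 1) ^ p ^ e := fun e => by
    rw [sub_pow_char_pow, one_pow, ← pow_mul, mul_comm]
  have hsplit : p ^ (a + 1) = p ^ a + (p ^ (a + 1) - p ^ a) :=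
    (Nat.add_sub_cancel' (Nat.pow_le_pow_right hp.pos a.le_succ)).symm
  rw [hfrob, hfrob, hsplit, pow_add]
  exact mul_dvd_mul_left _ (X_pow_sub_one_pow_dvd_map_of_adjoinDvd hpu hpw huw hζ hP)

end Core

lemma exists_eq_prime_pow_mul_of_dvd {p N n : ℕ} (hp : p.Prime) (hN : N ≠ 0) (hnN : n ∣ N)
    (hpn : p ∣ n) : ∃ a j u w, n = p ^ (a + 1) * u ∧ N = p ^ (a + 1 + j) * w ∧
      ¬ p ∣ u ∧ ¬ p ∣ w ∧ u ∣ w := by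
  have hn : n ≠ 0 := ne_zero_of_dvd_ne_zero hN hnN
  have hα : 1 ≤ n.factorization p := hp.factorization_pos_of_dvd hn hpn
  have hαβ : n.factorization p ≤ N.factorization p :=
    (Nat.factorization_le_iff_dvd hn hN).mpr hnN p
  refine ⟨n.factorization p - 1, N.factorization p - n.factorization p, ordCompl[p] n,
    ordCompl[p] N, ?_, ?_, Nat.not_dvd_ordCompl hp hn, Nat.not_dvd_ordCompl hp hN,
    Nat.ordCompl_dvd_ordCompl_of_dvd hnN p⟩
  · rw [Nat.sub_add_cancel hα, Nat.ordProj_mul_ordCompl_eq_self]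
  · rw [show n.factorization p - 1 + 1 + (N.factorization p - n.factorization p) =
      N.factorization p by omega, Nat.ordProj_mul_ordCompl_eq_self]

lemma dvd_sum_range_shift_sub {M : Type*} [CommRing M] {d : M} {n : ℕ} {h : ℕ → M}
    (hh : ∀ k, d ∣ h (k + n) - h k) (k : ℕ) :
    d ∣ ∑ i ∈ range n, h (k + i) - ∑ i ∈ range n, h i := by
  induction k with
  | zero => simp
  | succ k ih =>
    have h1 := sum_range_succ' (fun i => h (k + i)) n
    have h2 := sum_range_succ (fun i => h (k + i)) n
    have hshift : ∑ i ∈ range n, h (k + 1 + i) = ∑ i ∈ range n, h (k + (i + 1)) :=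
      sum_congr rfl fun i _ => by rw [add_right_comm, add_assoc]
    rw [hshift]
    convert dvd_add ih (hh k) using 1
    simp only [add_zero] at h1 h2
    linear_combination h2 - h1

section RangePoly

variable {R : Type*} [CommRing R] {n : ℕ}

noncomputable def rangePoly (n : ℕ) (f : ℕ → R) : R[X] := ∑ i ∈ range n, C (f i) * X ^ i

lemma rangePoly_map {S : Type*} [CommRing S] (φ : R →+* S) (f : ℕ → R) :
    (rangePoly n f).map φ = rangePoly n (fun i => φ (f i)) := by
  simp [rangePoly, Polynomial.map_sum]

lemma aeval_rangePoly (f : ℕ → ℤ) (θ : ℂ) :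
    aeval θ (rangePoly n f) = ∑ i ∈ range n, (f i : ℂ) * θ ^ i := by
  simp [rangePoly]

lemma rangePoly_sub (f g : ℕ → R) :
    rangePoly n f - rangePoly n g = rangePoly n (fun i => f i - g i) := by
  simp [rangePoly, sub_mul]

lemma degree_rangePoly_lt (f : ℕ → R) : (rangePoly n f).degree < n := by
  refine (degree_sum_le _ _).trans_lt ((Finset.sup_lt_iff (WithBot.bot_lt_coe n)).mpr
    fun i hi => (degree_C_mul_X_pow_le i (f i)).trans_lt ?_)
  exact WithBot.coe_lt_coe.mpr (mem_range.mp hi)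

lemma coeff_rangePoly (f : ℕ → R) {i : ℕ} (hi : i < n) : (rangePoly n f).coeff i = f i := by
  simp [rangePoly, hi]

lemma eq_of_X_pow_sub_one_dvd_rangePoly_sub [IsDomain R] {f g : ℕ → R}
    (h : (X : R[X]) ^ n - 1 ∣ rangePoly n f - rangePoly n g) {i : ℕ} (hi : i < n) :
    f i = g i := by
  rw [rangePoly_sub] at h
  have hdeg : (X ^ n - 1 : R[X]).degree = n := by
    simpa using degree_X_pow_sub_C (Nat.zero_lt_of_lt hi) (1 : R)
  have h0 := eq_zero_of_dvd_of_degree_lt h (hdeg ▸ degree_rangePoly_lt _)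
  have hi0 := congrArg (coeff · i) h0
  simp only [coeff_rangePoly _ hi, coeff_zero] at hi0
  exact sub_eq_zero.mp hi0

lemma X_pow_sub_one_dvd_X_pow_mul_rangePoly_sub {f g : ℕ → R} (hg : Periodic g n) {k : ℕ}
    (hfg : ∀ i, g (k + i) = f i) :
    (X : R[X]) ^ n - 1 ∣ X ^ k * rangePoly n f - rangePoly n g := by
  have h := dvd_sum_range_shift_sub (h := fun m => C (g m) * X ^ m) (d := (X : R[X]) ^ n - 1)
    (fun m => ⟨C (g m) * X ^ m, by rw [hg m, pow_add]; ring⟩) k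
  simp only [hfg, pow_add] at h
  rw [rangePoly, rangePoly, mul_sum]
  convert h using 2
  exact sum_congr rfl fun i _ => by ring

end RangePoly

theorem prime_dvd_sub_of_adjoinDvd {p N n : ℕ} (hp : p.Prime) (hN : N ≠ 0) (hnN : n ∣ N)
    (hpn : p ∣ n) {ζ : ℂ} (hζ : IsPrimitiveRoot ζ N) {f : ℕ → ℤ} (hf : Periodic f n)
    (hfζ : ∀ θ : ℂ, θ ^ n = 1 → θ ^ (n / p) ≠ 1 →
      AdjoinDvd ζ p (∑ i ∈ range n, (f i : ℂ) * θ ^ i)) (i : ℕ) :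
    (p : ℤ) ∣ f (i + n / p) - f i := by
  have : Fact p.Prime := ⟨hp⟩
  obtain ⟨a, j, u, w, rfl, rfl, hpu, hpw, huw⟩ := exists_eq_prime_pow_mul_of_dvd hp hN hnN hpn
  have hδ : p ^ (a + 1) * u / p = p ^ a * u := by
    rw [pow_succ, mul_right_comm, Nat.mul_div_cancel _ hp.pos]
  have hδn : p ^ a * u + (p ^ (a + 1) * u - p ^ a * u) = p ^ (a + 1) * u :=
    Nat.add_sub_cancel' (Nat.mul_le_mul_right u (Nat.pow_le_pow_right hp.pos a.le_succ))
  rw [hδ] at hfζ ⊢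
  set n := p ^ (a + 1) * u
  set δ := p ^ a * u
  set c := n - δ
  have hcore := X_pow_sub_one_dvd_mul_map_of_adjoinDvd hpu hpw huw hζ (P := rangePoly n f)
    fun θ h1 h2 => by rw [aeval_rangePoly]; exact hfζ θ h1 h2
  rw [rangePoly_map] at hcore
  set F := fun i => Int.castRingHom (ZMod p) (f i)
  have hF : Periodic F n := hf.comp _
  have hFc : Periodic (fun i => F (i + c)) n := fun i => by
    simp only [add_right_comm i n c, hF (i + c)]
  have hshift := X_pow_sub_one_dvd_X_pow_mul_rangePoly_sub (f := F) hFc (k := δ)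
    fun i => by simp only [show δ + i + c = i + n by omega, hF i]
  have hdiff : (X : (ZMod p)[X]) ^ n - 1 ∣ rangePoly n F - rangePoly n fun i => F (i + c) := by
    convert dvd_sub hshift hcore using 1
    ring
  have hn0 : 0 < n := Nat.pos_of_ne_zero (ne_zero_of_dvd_ne_zero hN hnN)
  have hcong : F (i + δ) = F (i + δ + c) := by
    rw [← hF.map_mod_nat, ← hFc.map_mod_nat]
    exact eq_of_X_pow_sub_one_dvd_rangePoly_sub hdiff (Nat.mod_lt _ hn0)
  rw [show i + δ + c = i + n by omega, hF i] at hcong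
  exact (ZMod.intCast_eq_intCast_iff_dvd_sub _ _ p).mp (by simpa [F] using hcong.symm)

lemma Function.Periodic.dvd_sub_of_forall_lt {f : ℕ → ℤ} {δ : ℕ} {d : ℤ}
    (hf : Periodic f (2 * δ)) (h : ∀ i < δ, d ∣ f (i + δ) - f i) (i : ℕ) :
    d ∣ f (i + δ) - f i := by
  rcases Nat.eq_zero_or_pos δ with rfl | hδ0
  · simp
  have hd : Periodic (fun i => f (i + δ) - f i) (2 * δ) := fun i => by
    simp only [add_right_comm i (2 * δ) δ, hf i, hf (i + δ)]
  rw [← hd.map_mod_nat]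
  obtain hr | hr := lt_or_ge (i % (2 * δ)) δ
  · exact h _ hr
  · obtain ⟨s, hs⟩ := Nat.exists_eq_add_of_le hr
    have hsδ : s < δ := by have := Nat.mod_lt i (by omega : 0 < 2 * δ); omega
    rw [hs, show δ + s + δ = s + 2 * δ by ring, hf s, add_comm δ s, ← dvd_neg, neg_sub]
    exact h s hsδ

theorem four_dvd_sub_of_adjoinDvd {N n : ℕ} (hN : N ≠ 0) (hnN : n ∣ N) (h2n : 2 ∣ n) {ζ : ℂ}
    (hζ : IsPrimitiveRoot ζ N) {f : ℕ → ℤ} (hf : Periodic f n)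
    (hfζ : ∀ θ : ℂ, θ ^ n = 1 → θ ^ (n / 2) ≠ 1 →
      AdjoinDvd ζ (2 * 2) (∑ i ∈ range n, (f i : ℂ) * θ ^ i)) (i : ℕ) :
    4 ∣ f (i + n / 2) - f i := by
  obtain ⟨δ, rfl⟩ := h2n
  have hδ : 2 * δ / 2 = δ := by omega
  rw [hδ] at hfζ ⊢
  have h2 (i : ℕ) : 2 ∣ f (i + δ) - f i := by
    simpa [hδ] using prime_dvd_sub_of_adjoinDvd Nat.prime_two hN hnN (dvd_mul_right 2 δ) hζ hf
      (fun θ h1 h2 => (hfζ θ h1 (hδ ▸ h2)).of_dvd (dvd_mul_right 2 2)) i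
  set e := fun i => (f i - f (i + δ)) / 2
  have he (i : ℕ) : f i - f (i + δ) = 2 * e i :=
    (Int.mul_ediv_cancel' (dvd_sub_comm.mp (h2 i))).symm
  -- At `θ` with `θ ^ δ = -1` the sum for `f` is twice the sum for `g`, so the case `p = 2` of
  -- `prime_dvd_sub_of_adjoinDvd` applies to `g` and shows that `e` is even.
  set g := fun i => if i % (2 * δ) < δ then e i else 0
  have hg : Periodic g (2 * δ) := fun i => by
    simp only [g, e, Nat.add_mod_right, hf i, add_right_comm i (2 * δ) δ, hf (i + δ)]
  have hg_lo (i : ℕ) (hi : i < δ) : g i = e i := if_pos (by rwa [Nat.mod_eq_of_lt (by omega)])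
  have hg_hi (i : ℕ) (hi : i < δ) : g (δ + i) = 0 :=
    if_neg (by rw [Nat.mod_eq_of_lt (by omega)]; omega)
  have hsum (θ : ℂ) (hθ : θ ^ δ = -1) : ∑ i ∈ range (2 * δ), (f i : ℂ) * θ ^ i =
      2 * ∑ i ∈ range (2 * δ), (g i : ℂ) * θ ^ i := by
    rw [two_mul δ, sum_range_add, sum_range_add, ← sum_add_distrib, ← sum_add_distrib, mul_sum]
    refine sum_congr rfl fun i hi => ?_
    have hi := mem_range.mp hi
    have hei : (f i : ℂ) - f (i + δ) = 2 * e i := by exact_mod_cast he i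
    rw [hg_lo i hi, hg_hi i hi, pow_add, hθ, add_comm δ i]
    push_cast
    linear_combination θ ^ i * hei
  have hlo (i : ℕ) (hi : i < δ) : 4 ∣ f (i + δ) - f i := by
    have hgζ (θ : ℂ) (h1 : θ ^ (2 * δ) = 1) (h2 : θ ^ (2 * δ / 2) ≠ 1) :
        AdjoinDvd ζ 2 (∑ i ∈ range (2 * δ), (g i : ℂ) * θ ^ i) := by
      rw [hδ] at h2
      have hθ : θ ^ δ = -1 :=
        (mul_self_eq_one_iff.mp (by rw [← pow_add, ← two_mul, h1])).resolve_left h2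
      refine AdjoinDvd.of_mul_mul two_ne_zero ?_
      exact_mod_cast hsum θ hθ ▸ hfζ θ h1 h2
    have h := prime_dvd_sub_of_adjoinDvd Nat.prime_two hN hnN (dvd_mul_right 2 δ) hζ hg hgζ i
    rw [hδ, add_comm i δ, hg_hi i hi, hg_lo i hi, zero_sub, dvd_neg] at h
    rw [← neg_sub, he, dvd_neg]
    exact mul_dvd_mul_left (2 : ℤ) h
  exact hf.dvd_sub_of_forall_lt hlo i

lemma sum_range_mul_eq_sum_sum {M : Type*} [AddCommMonoid M] (h : ℕ → M) (q m : ℕ) :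
    ∑ i ∈ range (q * m), h i = ∑ j ∈ range q, ∑ a ∈ range m, h (j * m + a) := by
  induction q with
  | zero => simp
  | succ q ih => rw [add_mul, one_mul, sum_range_add, ih, sum_range_succ]

lemma Function.Periodic.sum_range_mul {M : Type*} [AddCommMonoid M] {h : ℕ → M} {m : ℕ}
    (hh : Periodic h m) (q : ℕ) : ∑ i ∈ range (q * m), h i = q • ∑ a ∈ range m, h a := by
  have hshift (j a : ℕ) : h (j * m + a) = h a := by simpa [add_comm] using hh.nat_mul j a
  simp only [sum_range_mul_eq_sum_sum, hshift, sum_const, card_range]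

lemma eq_of_dvd_sub_of_le_two {d a b : ℤ} (hd : 3 ≤ d) (h : d ∣ a - b) (ha : 0 ≤ a ∧ a ≤ 2)
    (hb : 0 ≤ b ∧ b ≤ 2) : a = b :=
  sub_eq_zero.mp (Int.eq_zero_of_abs_lt_dvd h (by rw [abs_lt]; omega))

theorem periodic_div_prime_of_adjoinDvd {N : ℕ} (hN : N ≠ 0) {ζ : ℂ} (hζ : IsPrimitiveRoot ζ N)
    {n s p : ℕ} (hnN : n ∣ N) (hsn : s ∣ n) (hp : p.Prime)
    (hps : p ∣ s) {f : ℕ → ℤ} (hf : Periodic f n) (hf2 : ∀ i, 0 ≤ f i ∧ f i ≤ 2)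
    (hfζ : ∀ θ : ℂ, θ ^ n = 1 → θ ≠ 1 →
      AdjoinDvd ζ (2 * s) (∑ i ∈ range n, (f i : ℂ) * θ ^ i)) :
    Periodic f (n / p) := by
  intro i
  have hpn : p ∣ n := hps.trans hsn
  have hθ {θ : ℂ} (h1 : θ ^ n = 1) (h2 : θ ^ (n / p) ≠ 1) :=
    hfζ θ h1 (by rintro rfl; exact h2 (one_pow _))
  by_cases hp2 : p = 2
  · subst hp2
    refine eq_of_dvd_sub_of_le_two (d := 4) (by norm_num) ?_ (hf2 _) (hf2 _)
    exact four_dvd_sub_of_adjoinDvd hN hnN hpn hζ hf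
      (fun θ h1 h2 => (hθ h1 h2).of_dvd (mul_dvd_mul_left 2 hps)) i
  · have hp3 : (3 : ℤ) ≤ p := by have := hp.two_le; omega
    exact eq_of_dvd_sub_of_le_two hp3 (prime_dvd_sub_of_adjoinDvd hp hN hnN hpn hζ hf
      (fun θ h1 h2 => (hθ h1 h2).of_dvd (hps.mul_left 2)) i) (hf2 _) (hf2 _)

theorem periodic_div_of_adjoinDvd {N : ℕ} (hN : N ≠ 0) {ζ : ℂ} (hζ : IsPrimitiveRoot ζ N)
    (s : ℕ) : ∀ {n : ℕ}, s ∣ n → n ∣ N → ∀ {f : ℕ → ℤ}, Periodic f n → (∀ i, 0 ≤ f i ∧ f i ≤ 2) →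
    (∀ θ : ℂ, θ ^ n = 1 → θ ≠ 1 → AdjoinDvd ζ (2 * s) (∑ i ∈ range n, (f i : ℂ) * θ ^ i)) →
    Periodic f (n / s) := by
  induction s using Nat.strong_induction_on with
  | _ s ih =>
  intro n hsn hnN f hf hf2 hfζ
  obtain rfl | hs1 := eq_or_ne s 1
  · simpa using hf
  obtain ⟨m, rfl⟩ := hsn
  have hs0 : 0 < s := Nat.pos_of_ne_zero fun h => hN (zero_dvd_iff.mp (by simpa [h] using hnN))
  set p := s.minFac
  have hp : p.Prime := Nat.minFac_prime hs1
  obtain ⟨s', hs'⟩ : p ∣ s := Nat.minFac_dvd s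
  have hs'0 : 0 < s' := Nat.pos_of_ne_zero (by rintro rfl; simp at hs'; omega)
  have hn : s * m = p * (s' * m) := by rw [hs', mul_assoc]
  have hfp : Periodic f (s' * m) := by
    have := periodic_div_prime_of_adjoinDvd hN hζ hnN (dvd_mul_right s m) hp ⟨s', hs'⟩ hf hf2 hfζ
    rwa [hn, Nat.mul_div_cancel_left _ hp.pos] at this
  have hlt : s' < s := by
    rw [hs']
    exact lt_mul_left hs'0 hp.one_lt
  have hfζ' (θ : ℂ) (h1 : θ ^ (s' * m) = 1) (h2 : θ ≠ 1) :
      AdjoinDvd ζ (2 * s') (∑ i ∈ range (s' * m), (f i : ℂ) * θ ^ i) := by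
    have hper : Periodic (fun i => (f i : ℂ) * θ ^ i) (s' * m) := fun i => by
      simp only [hfp i, pow_add, h1, mul_one]
    refine AdjoinDvd.of_mul_mul hp.ne_zero ?_
    rw [← nsmul_eq_mul, ← hper.sum_range_mul, ← hn, show p * (2 * s') = 2 * s by
      rw [hs']; ring]
    exact hfζ θ (by rw [hn, pow_mul', h1, one_pow]) h2
  have := ih s' hlt (dvd_mul_right s' m) ((dvd_mul_left _ _).trans (hn ▸ hnN)) hfp hf2 hfζ'
  rwa [Nat.mul_div_cancel_left _ hs'0, ← Nat.mul_div_cancel_left m hs0] at this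

section Multiset

variable {n : ℕ} [NeZero n]

lemma sum_zmod_eq_sum_range {M : Type*} [AddCommMonoid M] (F : ZMod n → M) :
    ∑ x : ZMod n, F x = ∑ i ∈ range n, F i := by
  have hinj : Set.InjOn (Nat.cast : ℕ → ZMod n) (range n) := fun i hi j hj hij => by
    rw [← ZMod.val_cast_of_lt (mem_range.mp hi), ← ZMod.val_cast_of_lt (mem_range.mp hj)]
    exact congrArg ZMod.val hij
  have himage : (range n).image (Nat.cast : ℕ → ZMod n) = univ := eq_univ_of_forall fun x =>
    mem_image.mpr ⟨x.val, mem_range.mpr x.val_lt, ZMod.natCast_zmod_val x⟩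
  rw [← sum_image hinj, himage]

lemma Multiset.sum_map_eq_sum_range_count {M : Type*} [AddCommMonoid M] (U : Multiset (ZMod n))
    (φ : ZMod n → M) : (U.map φ).sum = ∑ i ∈ Finset.range n, U.count (i : ZMod n) • φ i := by
  rw [sum_multiset_map_count, ← sum_zmod_eq_sum_range fun x => U.count x • φ x]
  exact sum_subset (subset_univ _) fun x _ hx => by
    rw [Multiset.count_eq_zero.mpr (by simpa using hx), zero_smul]

lemma Multiset.eq_bind_range_map_of_periodic (U : Multiset (ZMod n)) {m s : ℕ}
    (hsm : s * m = n) (hU : Periodic (fun i : ℕ => U.count (i : ZMod n)) m) :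
    U = ((range m).bind fun a => replicate (U.count (a : ZMod n)) a).bind
      fun a => (range s).map fun j => ((a + j * m : ℕ) : ZMod n) := by
  have hU' := U.sum_map_eq_sum_range_count fun x => ({x} : Multiset (ZMod n))
  rw [Multiset.sum_map_singleton] at hU'
  conv_lhs => rw [hU', show Finset.range n = Finset.range (s * m) by rw [hsm],
    sum_range_mul_eq_sum_sum, sum_comm]
  rw [Multiset.bind_assoc]
  refine Finset.sum_congr rfl fun a _ => ?_
  have hcount (j : ℕ) : U.count ((j * m + a : ℕ) : ZMod n) = U.count (a : ZMod n) := by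
    rw [add_comm]
    exact hU.nat_mul j a
  rw [Multiset.bind, Multiset.map_replicate, Multiset.join, Multiset.sum_replicate,
    ← Multiset.bind_singleton]
  change _ = _ • ∑ j ∈ Finset.range s, _
  rw [Finset.smul_sum]
  exact Finset.sum_congr rfl fun j _ => by rw [hcount, add_comm]

end Multiset

lemma Multiset.count_bind_range_replicate (g : ℕ → ℕ) (m a : ℕ) :
    ((range m).bind fun b => replicate (g b) b).count a = if a < m then g a else 0 := by
  change (∑ b ∈ Finset.range m, replicate (g b) b).count a = _
  simp [Multiset.count_sum', Multiset.count_replicate]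

lemma Multiset.lt_of_mem_bind_range_replicate {g : ℕ → ℕ} {m a : ℕ}
    (ha : a ∈ (range m).bind fun b => replicate (g b) b) : a < m := by
  obtain ⟨b, hb, hab⟩ := Multiset.mem_bind.mp ha
  rw [eq_of_mem_replicate hab]
  exact Multiset.mem_range.mp hb

lemma Multiset.adjoinDvd_sum_range_count {n d : ℕ} [NeZero n] {ζ : ℂ} (hζ : IsPrimitiveRoot ζ n)
    (U : Multiset (ZMod n)) (hU : ∀ z : ZMod n, z ≠ 0 → ∃ y ∈ Algebra.adjoin ℤ ({ζ} : Set ℂ),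
      (U.map fun i => ζ ^ (i.val * z.val)).sum = d * y)
    {θ : ℂ} (h1 : θ ^ n = 1) (h2 : θ ≠ 1) :
    AdjoinDvd ζ d (∑ i ∈ Finset.range n, ((U.count (i : ZMod n) : ℤ) : ℂ) * θ ^ i) := by
  obtain ⟨k, hk, rfl⟩ := hζ.eq_pow_of_pow_eq_one h1
  have hk0 : (k : ZMod n) ≠ 0 := fun h => h2 (by
    rw [← ZMod.val_cast_of_lt hk, h, ZMod.val_zero, pow_zero])
  obtain ⟨y, hy, hsum⟩ := hU k hk0
  refine ⟨y, hy, ?_⟩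
  rw [← hsum, Multiset.sum_map_eq_sum_range_count]
  refine Finset.sum_congr rfl fun i hi => ?_
  rw [nsmul_eq_mul, ZMod.val_cast_of_lt hk, ZMod.val_cast_of_lt (Finset.mem_range.mp hi),
    ← pow_mul, mul_comm k i]
  push_cast
  rfl

theorem multiset_coset_structure_even_general (c ν c₁ n : ℕ) (hν : 1 ≤ ν)
    (hc : c = 2 ^ ν * c₁) (hdvd : c ∣ 2 * n) (hn : 0 < n)
    (ζ : ℂ) (hζ : IsPrimitiveRoot ζ n)
    (U : Multiset (ZMod n)) (hU2 : ∀ a : ZMod n, U.count a ≤ 2)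
    (hchar : ∀ z : ZMod n, z ≠ 0 →
      ∃ y ∈ Algebra.adjoin ℤ ({ζ} : Set ℂ),
        (U.map (fun i => ζ ^ (i.val * z.val))).sum = (c : ℂ) * y) :
    ∃ E : Multiset ℕ, (∀ a ∈ E, a < 2 * n / c) ∧ (∀ a : ℕ, E.count a ≤ 2) ∧
      U = E.bind (fun a => (Multiset.range (c / 2)).map
        (fun j => ((a + j * (2 * n / c) : ℕ) : ZMod n))) := by
  have : NeZero n := ⟨hn.ne'⟩
  obtain ⟨s, rfl⟩ : 2 ∣ c := hc ▸ (dvd_pow_self 2 (by omega)).mul_right c₁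
  obtain ⟨m, hm⟩ : s ∣ n := Nat.dvd_of_mul_dvd_mul_left two_pos hdvd
  have hs0 : 0 < s := Nat.pos_of_ne_zero (by rintro rfl; omega)
  have hns : n / s = m := by rw [hm, Nat.mul_div_cancel_left m hs0]
  rw [Nat.mul_div_cancel_left s two_pos, Nat.mul_div_mul_left n s two_pos, hns]
  set f : ℕ → ℤ := fun i => U.count (i : ZMod n)
  have hf : Periodic f n := fun i => by simp [f]
  have hper := periodic_div_of_adjoinDvd hn.ne' hζ s ⟨m, hm⟩ dvd_rfl hf
    (fun i => ⟨by positivity, by simpa [f] using hU2 _⟩)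
    fun θ h1 h2 => U.adjoinDvd_sum_range_count hζ hchar h1 h2
  rw [hns] at hper
  refine ⟨(Multiset.range m).bind fun a => Multiset.replicate (U.count (a : ZMod n)) a,
    fun a ha => Multiset.lt_of_mem_bind_range_replicate ha, fun a => ?_,
    U.eq_bind_range_map_of_periodic hm.symm fun i => by simpa [f] using hper i⟩
  rw [Multiset.count_bind_range_replicate]
  split_ifs
  exacts [hU2 _, zero_le_two]

/-- Let `c = 2^ν·c₁` be even with `c₁` odd, `c ∣ 2n` and `c₁ ∣ n`.
If `U` is a multisubset of `ZMod n` with multiplicities at most `2` and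
`χ(Ū) ≡ 0 (mod c)` (in `ℤ[ζ_n]`) for all nonprincipal characters `χ`, then
`U = x^E·⟨x^{2n/c}⟩` for some multisubset `E` of `{0,…,2n/c − 1}` with multiplicities
at most `2` (the subgroup `⟨x^{2n/c}⟩` having order `c/2`). -/
theorem multiset_coset_structure_even (c ν c₁ n : ℕ) (hν : 1 ≤ ν) (hc₁ : Odd c₁)
    (hc : c = 2 ^ ν * c₁) (hdvd : c ∣ 2 * n) (hdvd₁ : c₁ ∣ n) (hn : 0 < n)
    (ζ : ℂ) (hζ : IsPrimitiveRoot ζ n)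
    (U : Multiset (ZMod n)) (hU2 : ∀ a : ZMod n, U.count a ≤ 2)
    (hchar : ∀ z : ZMod n, z ≠ 0 →
      ∃ y ∈ Algebra.adjoin ℤ ({ζ} : Set ℂ),
        (U.map (fun i => ζ ^ (i.val * z.val))).sum = (c : ℂ) * y) :
    ∃ E : Multiset ℕ, (∀ a ∈ E, a < 2 * n / c) ∧ (∀ a : ℕ, E.count a ≤ 2) ∧
      U = E.bind (fun a => (Multiset.range (c / 2)).map
        (fun j => ((a + j * (2 * n / c) : ℕ) : ZMod n))) :=
  multiset_coset_structure_even_general c ν c₁ n hν hc hdvd hn ζ hζ U hU2 hchar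
end

section
/- Let U = x^E be a nonempty multisubset of C_n with e ∉ U and multiplicities at most 2 such that χ(Ū) ∈ {0, c} for all nonprincipal characters χ, where c ≠ 0. Let Γ_c = {z ∈ Z_n \ {0} : χ_z(Ū) = c} and δ_c = gcd(n, gcd of the elements of Γ_c). Then the set of z ∈ Z_n with multiplicity 0 in E equals the subgroup (n/δ_c)·Z_n. -/
/-!
Write `F w = χ_w(Ū)` and `m(b)` for the multiplicity of `b` in `E`. Fourier inversion on `Z_n`
gives `n · m(b) = ∑_w F w · ζ^(-bw)`. Since `F` vanishes outside `{0} ∪ Γ_c`, equals `c` on `Γ_c`,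
and `m(0) = 0`, this becomes `n · m(b) = c · ∑_{w ∈ Γ_c} (ζ^(-bw) - 1)`. The `ζ^(-bw)` lie on the
unit circle, so `m(b) = 0` iff `bw = 0` for all `w ∈ Γ_c`, i.e. iff `n ∣ b · gcd Γ_c`, i.e. iff
`n / δ_c ∣ b`.
-/

open Finset

open scoped ComplexOrder in
lemma Complex.sum_eq_card_iff_forall_eq_one {ι : Type*} {s : Finset ι} {u : ι → ℂ}
    (hu : ∀ i ∈ s, ‖u i‖ ≤ 1) : ∑ i ∈ s, u i = #s ↔ ∀ i ∈ s, u i = 1 := by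
  refine ⟨fun h => ?_, fun h => by simp [sum_congr rfl h]⟩
  have hre_le : ∀ i ∈ s, (u i).re ≤ 1 := fun i hi => (re_le_norm _).trans (hu i hi)
  have hre : ∀ i ∈ s, (u i).re = 1 := by
    refine (sum_eq_sum_iff_of_le hre_le).mp ?_
    simpa [re_sum] using congrArg re h
  intro i hi
  have hnonneg : 0 ≤ u i :=
    re_eq_norm.mp (le_antisymm (re_le_norm _) ((hu i hi).trans (hre i hi).ge))
  exact ext (hre i hi) (nonneg_iff.mp hnonneg).2.symm

section CharSum

variable {R : Type*} [CommRing R] [Fintype R] [DecidableEq R] {ψ : AddChar R ℂ}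

/-- With `χ_w = ψ (· * w)`, `charSum ψ E w` is `χ_w(Ū)` and `levelSet ψ E c` is `Γ_c`. -/
def charSum (ψ : AddChar R ℂ) (E : Multiset R) (w : R) : ℂ :=
  (E.map fun i => ψ (i * w)).sum

noncomputable def levelSet (ψ : AddChar R ℂ) (E : Multiset R) (c : ℂ) : Finset R :=
  univ.filter fun w => w ≠ 0 ∧ charSum ψ E w = c

omit [Fintype R] [DecidableEq R] in
lemma charSum_zero (ψ : AddChar R ℂ) (E : Multiset R) : charSum ψ E 0 = Multiset.card E := by
  simp [charSum]

lemma sum_charSum_mul_eq_card_mul_count (hψ : ψ.IsPrimitive) (E : Multiset R) (b : R) :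
    ∑ w, charSum ψ E w * ψ (-(b * w)) = Fintype.card R * E.count b := by
  induction E using Multiset.induction_on with
  | empty => simp [charSum]
  | cons a E ih =>
    have hterm : ∀ w, ψ (a * w) * ψ (-(b * w)) = ψ (w * (a - b)) := fun w => by
      rw [← AddChar.map_add_eq_mul]; ring_nf
    simp only [charSum, Multiset.map_cons, Multiset.sum_cons, add_mul, sum_add_distrib,
      hterm, AddChar.sum_mulShift _ hψ, sub_eq_zero] at ih ⊢
    rw [ih, Multiset.count_cons]
    by_cases h : a = b
    · simp [h, mul_add, add_comm]
    · simp [h, Ne.symm h]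

lemma sum_charSum_mul_eq_card_add_sum_levelSet {E : Multiset R} {c : ℂ}
    (hchar : ∀ w, w ≠ 0 → charSum ψ E w = 0 ∨ charSum ψ E w = c) (b : R) :
    ∑ w, charSum ψ E w * ψ (-(b * w)) =
      Multiset.card E + c * ∑ w ∈ levelSet ψ E c, ψ (-(b * w)) := by
  have h0 : (0 : R) ∉ levelSet ψ E c := by simp [levelSet]
  rw [← sum_subset (subset_univ (insert 0 (levelSet ψ E c))), sum_insert h0, mul_sum]
  · simp only [charSum_zero, mul_zero, neg_zero, AddChar.map_zero_eq_one, mul_one]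
    congr 1
    refine sum_congr rfl fun w hw => ?_
    rw [(mem_filter.mp hw).2.2]
  · intro w _ hw
    simp only [levelSet, mem_insert, mem_filter, mem_univ, true_and, not_or] at hw
    rcases hchar w hw.1 with h | h
    · rw [h, zero_mul]
    · exact absurd ⟨hw.1, h⟩ hw.2

lemma card_mul_count_eq_mul_sum_levelSet (hψ : ψ.IsPrimitive) {E : Multiset R} {c : ℂ}
    (h0 : (0 : R) ∉ E)
    (hchar : ∀ w, w ≠ 0 → charSum ψ E w = 0 ∨ charSum ψ E w = c) (b : R) :
    Fintype.card R * E.count b = c * ∑ w ∈ levelSet ψ E c, (ψ (-(b * w)) - 1) := by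
  -- at `b = 0` the two expansions give `0 = card E + c · #Γ_c`
  have hcard := (sum_charSum_mul_eq_card_add_sum_levelSet hchar 0).symm.trans
    (sum_charSum_mul_eq_card_mul_count hψ E 0)
  simp only [zero_mul, neg_zero, AddChar.map_zero_eq_one, sum_const, nsmul_one,
    Multiset.count_eq_zero_of_notMem h0, Nat.cast_zero, mul_zero] at hcard
  rw [← sum_charSum_mul_eq_card_mul_count hψ, sum_charSum_mul_eq_card_add_sum_levelSet hchar,
    sum_sub_distrib, sum_const, nsmul_one]
  linear_combination hcard

lemma count_eq_zero_iff_forall_mem_levelSet (hψ : ψ.IsPrimitive) {E : Multiset R} {c : ℂ}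
    (hc : c ≠ 0) (h0 : (0 : R) ∉ E)
    (hchar : ∀ w, w ≠ 0 → charSum ψ E w = 0 ∨ charSum ψ E w = c) (b : R) :
    E.count b = 0 ↔ ∀ w ∈ levelSet ψ E c, ψ (b * w) = 1 := by
  have hcount :
      E.count b = 0 ↔ ∑ w ∈ levelSet ψ E c, ψ (-(b * w)) = #(levelSet ψ E c) := by
    have hR : (Fintype.card R : ℂ) ≠ 0 := Nat.cast_ne_zero.mpr Fintype.card_ne_zero
    rw [← Nat.cast_eq_zero (R := ℂ), ← mul_right_inj' hR, mul_zero,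
      card_mul_count_eq_mul_sum_levelSet hψ h0 hchar, mul_eq_zero, or_iff_right hc,
      sum_sub_distrib, sum_const, nsmul_one, sub_eq_zero]
  rw [hcount, Complex.sum_eq_card_iff_forall_eq_one fun w _ => (ψ.norm_apply _).le]
  simp only [AddChar.map_neg_eq_inv, inv_eq_one]

end CharSum

lemma Nat.dvd_mul_iff_div_gcd_dvd {n g a : ℕ} (hn : 0 < n) :
    n ∣ a * g ↔ n / n.gcd g ∣ a := by
  have hd : 0 < n.gcd g := Nat.gcd_pos_of_pos_left g hn
  calc n ∣ a * g ↔ n / n.gcd g * n.gcd g ∣ a * (g / n.gcd g) * n.gcd g := by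
        rw [Nat.div_mul_cancel (Nat.gcd_dvd_left n g), mul_assoc,
          Nat.div_mul_cancel (Nat.gcd_dvd_right n g)]
    _ ↔ n / n.gcd g ∣ a * (g / n.gcd g) := Nat.mul_dvd_mul_iff_right hd
    _ ↔ n / n.gcd g ∣ a := (Nat.coprime_div_gcd_div_gcd hd).dvd_mul_right

namespace ZMod

variable {n : ℕ} [NeZero n]

lemma mem_zmultiples_natCast_iff {m : ℕ} (hm : m ∣ n) (b : ZMod n) :
    b ∈ AddSubgroup.zmultiples (m : ZMod n) ↔ m ∣ b.val := by
  constructor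
  · rintro ⟨k, rfl⟩
    have := congrArg (castHom hm (ZMod m)) (natCast_zmod_val (k • (m : ZMod n)))
    rw [map_natCast, map_zsmul, map_natCast, natCast_self, smul_zero] at this
    exact (natCast_eq_zero_iff _ _).mp this
  · rintro ⟨t, ht⟩
    rw [← natCast_zmod_val b, ht, Nat.cast_mul, ← nsmul_eq_mul']
    exact AddSubgroup.nsmul_mem _ (AddSubgroup.mem_zmultiples _) t

lemma forall_mul_eq_zero_iff_mem_zmultiples (T : Finset (ZMod n)) (b : ZMod n) :
    (∀ w ∈ T, b * w = 0) ↔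
      b ∈ AddSubgroup.zmultiples ((n / n.gcd (T.gcd ZMod.val) : ℕ) : ZMod n) := by
  have hmul : ∀ w : ZMod n, b * w = 0 ↔ n ∣ b.val * w.val := fun w => by
    rw [← natCast_eq_zero_iff, Nat.cast_mul, natCast_zmod_val, natCast_zmod_val]
  simp only [hmul]
  rw [← Finset.dvd_gcd_iff, Finset.gcd_mul_left, normalize_eq,
    Nat.dvd_mul_iff_div_gcd_dvd (NeZero.pos n),
    mem_zmultiples_natCast_iff (Nat.div_dvd_of_dvd (Nat.gcd_dvd_left _ _))]

end ZMod

lemma charSum_zmodChar {n : ℕ} [NeZero n] {ζ : ℂ} (hζ : ζ ^ n = 1) (E : Multiset (ZMod n))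
    (w : ZMod n) :
    charSum (AddChar.zmodChar n hζ) E w = (E.map fun i => ζ ^ (i.val * w.val)).sum := by
  simp only [charSum, ← AddChar.zmodChar_apply' hζ, Nat.cast_mul, ZMod.natCast_zmod_val]

theorem complement_of_E_is_subgroup_general (n : ℕ) [NeZero n] (c : ℤ) (hc : c ≠ 0)
    (ζ : ℂ) (hζ : IsPrimitiveRoot ζ n)
    (E : Multiset (ZMod n)) (h0 : (0 : ZMod n) ∉ E)
    (hchar : ∀ z : ZMod n, z ≠ 0 →
      (E.map (fun i => ζ ^ (i.val * z.val))).sum = 0 ∨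
      (E.map (fun i => ζ ^ (i.val * z.val))).sum = (c : ℂ)) :
    ∀ z : ZMod n,
      E.count z = 0 ↔
        z ∈ AddSubgroup.zmultiples
          (((n / Nat.gcd n
              ((Finset.univ.filter (fun w : ZMod n => w ≠ 0 ∧
                (E.map (fun i => ζ ^ (i.val * w.val))).sum = (c : ℂ))).gcd
                ZMod.val) : ℕ) : ZMod n)) := by
  have hψ := AddChar.zmodChar_primitive_of_primitive_root n hζ
  simp only [← charSum_zmodChar hζ.pow_eq_one E] at hchar ⊢
  intro b
  rw [count_eq_zero_iff_forall_mem_levelSet hψ (Int.cast_ne_zero.mpr hc) h0 hchar,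
    ← ZMod.forall_mul_eq_zero_iff_mem_zmultiples, levelSet]
  simp only [hψ.zmod_char_eq_one_iff]

/-- with `Γ_c = {z ≠ 0 : χ_z(Ū) = c}` and
`δ_c = gcd(n, gcd of the elements of Γ_c)`, the set of `z ∈ ZMod n` of multiplicity `0`
in `E` is exactly the subgroup `(n/δ_c)·Z_n`. -/
theorem complement_of_E_is_subgroup (n : ℕ) [NeZero n] (c : ℤ) (hc : c ≠ 0)
    (ζ : ℂ) (hζ : IsPrimitiveRoot ζ n)
    (E : Multiset (ZMod n)) (hne : E ≠ 0) (h0 : (0 : ZMod n) ∉ E)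
    (h2 : ∀ a : ZMod n, E.count a ≤ 2)
    (hchar : ∀ z : ZMod n, z ≠ 0 →
      (E.map (fun i => ζ ^ (i.val * z.val))).sum = 0 ∨
      (E.map (fun i => ζ ^ (i.val * z.val))).sum = (c : ℂ)) :
    ∀ z : ZMod n,
      E.count z = 0 ↔
        z ∈ AddSubgroup.zmultiples
          (((n / Nat.gcd n
              ((Finset.univ.filter (fun w : ZMod n => w ≠ 0 ∧
                (E.map (fun i => ζ ^ (i.val * w.val))).sum = (c : ℂ))).gcd
                ZMod.val) : ℕ) : ZMod n)) :=
  complement_of_E_is_subgroup_general n c hc ζ hζ E h0 hchar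
end

section
/- Let U = x^E be a nonempty multisubset of the cyclic group C_n with e ∉ U, all multiplicities at most 2, such that χ(Ū) ∈ {0, −1} for every nonprincipal character χ of C_n. Then U = C_n \ {e} (as a set, each element occurring once). -/
private lemma msum_comm {α β M : Type*} [AddCommMonoid M] (s : Finset α) (E : Multiset β)
    (f : α → β → M) :
    ∑ z ∈ s, (E.map (f z)).sum = (E.map (fun b => ∑ z ∈ s, f z b)).sum := by
  induction E using Multiset.induction_on with
  | empty => simp
  | cons a E ih => simp [Finset.sum_add_distrib, ih]

private lemma msum_ite {α : Type*} [DecidableEq α] (E : Multiset α) (a : α) (c : ℂ) :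
    (E.map (fun b => if a = b then c else 0)).sum = (E.count a : ℂ) * c := by
  induction E using Multiset.induction_on with
  | empty => simp
  | cons x E ih =>
    by_cases h : a = x
    · subst h
      simp only [Multiset.map_cons, Multiset.sum_cons, if_pos rfl, ih,
        Multiset.count_cons_self]
      push_cast; ring
    · simp [Multiset.count_cons_of_ne (Ne.symm h) , h, ih]

/-- Let `U = x^E` be a nonempty multisubset of `ZMod n` with `0 ∉ E`,
multiplicities at most `2`, such that `χ(Ū) ∈ {0, −1}` for all nonprincipal characters.
Then `U = C_n \ {e}`, i.e. `E` consists of every nonzero element exactly once. -/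
theorem eq_all_nonidentity (n : ℕ) [NeZero n]
    (ζ : ℂ) (hζ : IsPrimitiveRoot ζ n)
    (E : Multiset (ZMod n)) (hne : E ≠ 0) (h0 : (0 : ZMod n) ∉ E)
    (h2 : ∀ a : ZMod n, E.count a ≤ 2)
    (hchar : ∀ z : ZMod n, z ≠ 0 →
      (E.map (fun i => ζ ^ (i.val * z.val))).sum = 0 ∨
      (E.map (fun i => ζ ^ (i.val * z.val))).sum = -1) :
    E = (Finset.univ : Finset (ZMod n)).val.erase 0 := by
  classical
  have hn0 : n ≠ 0 := NeZero.ne n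
  have hn : 0 < n := Nat.pos_of_ne_zero hn0
  have hzn : ζ ^ n = 1 := hζ.pow_eq_one
  have hznz : ζ ≠ 0 := hζ.ne_zero hn0
  have hval : ∀ x : ZMod n, ((x.val : ℕ) : ZMod n) = x := fun x => by simp [ZMod.natCast_val]
  -- conjugation of powers
  have hconj : ∀ m : ℤ, (starRingEnd ℂ) (ζ ^ m) = ζ ^ (-m) := by
    intro m
    have hnorm : ‖ζ ^ m‖ = 1 := by
      rw [norm_zpow, Complex.norm_eq_one_of_pow_eq_one hzn hn0, one_zpow]
    rw [← Complex.inv_eq_conj hnorm, ← zpow_neg]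
  -- orthogonality
  have horth : ∀ d : ℤ, ∑ z : ZMod n, (ζ ^ d) ^ z.val = if (n : ℤ) ∣ d then (n : ℂ) else 0 := by
    intro d
    have hb : ∑ z : ZMod n, (ζ ^ d) ^ z.val = ∑ i ∈ Finset.range n, (ζ ^ d) ^ i := by
      refine Finset.sum_nbij' (fun z => z.val) (fun i => (i : ZMod n))
        (fun z _ => Finset.mem_range.2 z.val_lt) (fun i _ => Finset.mem_univ _)
        (fun z _ => hval z) (fun i hi => ZMod.val_cast_of_lt (Finset.mem_range.1 hi))
        (fun z _ => rfl)
    rw [hb]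
    by_cases h : (n : ℤ) ∣ d
    · have h1 : ζ ^ d = 1 := (hζ.zpow_eq_one_iff_dvd d).2 h
      simp [h1, h]
    · have hne1 : ζ ^ d ≠ 1 := fun hh => h ((hζ.zpow_eq_one_iff_dvd d).1 hh)
      rw [geom_sum_eq hne1, if_neg h]
      have hwn : (ζ ^ d) ^ n = 1 := by
        rw [← zpow_natCast, ← zpow_mul, mul_comm, zpow_mul, zpow_natCast, hzn, one_zpow]
      rw [hwn]; simp
  -- dvd criterion
  have hdvd_iff : ∀ a b : ZMod n, ((n : ℤ) ∣ ((a.val : ℤ) - (b.val : ℤ))) ↔ a = b := by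
    intro a b
    constructor
    · intro h
      have hlt : |(a.val : ℤ) - (b.val : ℤ)| < n := by
        have := a.val_lt; have := b.val_lt
        rw [abs_lt]; omega
      have h9 : (a.val : ℤ) - (b.val : ℤ) = 0 := Int.eq_zero_of_abs_lt_dvd h hlt
      have hv : a.val = b.val := by omega
      rw [← hval a, ← hval b, hv]
    · rintro rfl; simp
  set F : ZMod n → ℂ := fun z => (E.map (fun i => ζ ^ (i.val * z.val))).sum with hF
  have hFz : ∀ z : ZMod n, F z = (E.map (fun a => (ζ ^ (a.val : ℤ)) ^ z.val)).sum := by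
    intro z
    refine congrArg Multiset.sum (Multiset.map_congr rfl fun a _ => ?_)
    rw [pow_mul, zpow_natCast]
  -- sum over all characters is 0
  have hsum0 : ∑ z : ZMod n, F z = 0 := by
    have : ∑ z : ZMod n, F z
        = (E.map (fun a => ∑ z : ZMod n, (ζ ^ (a.val : ℤ)) ^ z.val)).sum := by
      rw [← msum_comm]; exact Finset.sum_congr rfl fun z _ => hFz z
    rw [this]
    refine Multiset.sum_eq_zero fun x hx => ?_
    obtain ⟨a, ha, rfl⟩ := Multiset.mem_map.1 hx
    rw [horth, if_neg]
    intro hdvd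
    have hdd : n ∣ a.val := Int.ofNat_dvd.mp hdvd
    have hv0 : a.val = 0 := Nat.eq_zero_of_dvd_of_lt hdd a.val_lt
    have : a = 0 := by rw [← hval a, hv0]; simp
    exact h0 (this ▸ ha)
  have hF0 : F 0 = (Multiset.card E : ℂ) := by
    simp [hF, ZMod.val_zero, Multiset.map_const', Multiset.sum_replicate]
  -- conjugate of F
  have hFconj : ∀ z : ZMod n,
      (starRingEnd ℂ) (F z) = (E.map (fun b => ζ ^ (-(↑(b.val * z.val)) : ℤ))).sum := by
    intro z
    rw [hF]
    rw [map_multiset_sum, Multiset.map_map]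
    refine congrArg Multiset.sum (Multiset.map_congr rfl fun b _ => ?_)
    simp only [Function.comp_apply]
    rw [← zpow_natCast, hconj]
  -- F z * conj (F z) as double sum
  have hprod : ∀ z : ZMod n, F z * (starRingEnd ℂ) (F z)
      = (E.map (fun a => (E.map (fun b =>
          ζ ^ (((a.val : ℤ) - b.val) * z.val))).sum)).sum := by
    intro z
    rw [hF, hFconj, ← Multiset.sum_map_mul_right]
    refine congrArg Multiset.sum (Multiset.map_congr rfl fun a _ => ?_)
    rw [← Multiset.sum_map_mul_left]
    refine congrArg Multiset.sum (Multiset.map_congr rfl fun b _ => ?_)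
    rw [← zpow_natCast ζ (a.val * z.val), ← zpow_add₀ hznz]
    congr 1
    push_cast
    ring
  -- Parseval
  have hpars : ∑ z : ZMod n, F z * (starRingEnd ℂ) (F z)
      = (E.map (fun a => (E.count a : ℂ))).sum * n := by
    have h1 : ∑ z : ZMod n, F z * (starRingEnd ℂ) (F z)
        = (E.map (fun a => (E.map (fun b =>
            ∑ z : ZMod n, ζ ^ (((a.val : ℤ) - b.val) * z.val))).sum)).sum := by
      rw [show (∑ z : ZMod n, F z * (starRingEnd ℂ) (F z))
          = ∑ z : ZMod n, (E.map (fun a => (E.map (fun b =>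
              ζ ^ (((a.val : ℤ) - b.val) * z.val))).sum)).sum
        from Finset.sum_congr rfl fun z _ => hprod z]
      rw [msum_comm]
      refine congrArg Multiset.sum (Multiset.map_congr rfl fun a _ => ?_)
      rw [msum_comm]
    rw [h1, ← Multiset.sum_map_mul_right]
    refine congrArg Multiset.sum (Multiset.map_congr rfl fun a _ => ?_)
    have h2 : (E.map (fun b => ∑ z : ZMod n, ζ ^ (((a.val : ℤ) - b.val) * z.val))).sum
        = (E.map (fun b => if a = b then (n : ℂ) else 0)).sum := by
      refine congrArg Multiset.sum (Multiset.map_congr rfl fun b _ => ?_)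
      have h3 : ∀ z : ZMod n, ζ ^ (((a.val : ℤ) - b.val) * z.val)
          = (ζ ^ ((a.val : ℤ) - b.val)) ^ z.val := by
        intro z
        rw [zpow_mul, zpow_natCast]
      rw [Finset.sum_congr rfl fun z _ => h3 z, horth]
      by_cases hab : a = b
      · rw [if_pos ((hdvd_iff a b).2 hab), if_pos hab]
      · rw [if_neg (fun hc => hab ((hdvd_iff a b).1 hc)), if_neg hab]
    rw [h2, msum_ite]
  -- values on nonzero characters
  have hval2 : ∀ z : ZMod n, z ≠ 0 → F z * (starRingEnd ℂ) (F z) = -F z := by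
    intro z hz
    rcases hchar z hz with h | h
    · have h' : F z = 0 := h
      rw [h']; simp
    · have h' : F z = -1 := h
      rw [h']; simp
  set S : ℕ := Multiset.card E with hS
  set T : ℕ := (E.map (fun a => E.count a)).sum with hT
  have hTc : (E.map (fun a => (E.count a : ℂ))).sum = (T : ℂ) := by
    rw [hT, Nat.cast_multiset_sum, Multiset.map_map]
    rfl
  have hmem0 : (0 : ZMod n) ∈ (Finset.univ : Finset (ZMod n)) := Finset.mem_univ _
  have hsplit : ∀ f : ZMod n → ℂ,
      f 0 + ∑ z ∈ Finset.univ.erase (0 : ZMod n), f z = ∑ z : ZMod n, f z :=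
    fun f => Finset.add_sum_erase _ f hmem0
  have hsumE : ∑ z ∈ Finset.univ.erase (0 : ZMod n), F z = -(S : ℂ) := by
    have := hsplit F
    rw [hsum0, hF0] at this
    linear_combination this
  -- key identity over ℂ
  have hkey : (T : ℂ) * n = (S : ℂ) * S + S := by
    rw [← hTc, ← hpars, ← hsplit (fun z => F z * (starRingEnd ℂ) (F z))]
    have hrw : ∑ z ∈ Finset.univ.erase (0 : ZMod n), F z * (starRingEnd ℂ) (F z)
        = ∑ z ∈ Finset.univ.erase (0 : ZMod n), -F z :=
      Finset.sum_congr rfl fun z hz => hval2 z (Finset.ne_of_mem_erase hz)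
    rw [hrw, Finset.sum_neg_distrib, hsumE, hF0]
    simp
  -- nat version
  have hkeyN : n * T = S * S + S := by
    have : ((n * T : ℕ) : ℂ) = ((S * S + S : ℕ) : ℂ) := by push_cast; linear_combination hkey
    exact_mod_cast this
  -- bound S + 1 ≤ n
  have hcard_erase : (Finset.univ.erase (0 : ZMod n)).card = n - 1 := by
    rw [Finset.card_erase_of_mem hmem0, Finset.card_univ, ZMod.card]
  have hSle : S + 1 ≤ n := by
    have hre : ∑ z ∈ Finset.univ.erase (0 : ZMod n), (F z).re = -(S : ℝ) := by
      have := congrArg Complex.re hsumE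
      simpa [Complex.re_sum] using this
    have hge : ∀ z ∈ Finset.univ.erase (0 : ZMod n), (-1 : ℝ) ≤ (F z).re := by
      intro z hz
      rcases hchar z (Finset.ne_of_mem_erase hz) with h | h
      · have h' : F z = 0 := h
        rw [h']; simp
      · have h' : F z = -1 := h
        rw [h']; simp
    have hst := Finset.sum_le_sum hge
    rw [hre, Finset.sum_const, hcard_erase] at hst
    have hst2 : ((n - 1 : ℕ) : ℝ) * (-1) ≤ -(S : ℝ) := by
      simpa [nsmul_eq_mul] using hst
    have h2 : (S : ℝ) ≤ ((n - 1 : ℕ) : ℝ) := by linarith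
    have h3 : S ≤ n - 1 := by exact_mod_cast h2
    omega
  have hS1 : 1 ≤ S := by
    rw [hS, Nat.one_le_iff_ne_zero]
    simpa using hne
  -- T as finset sum, T ≥ S
  have hTfin : T = ∑ a ∈ E.toFinset, E.count a * E.count a := by
    rw [hT, Finset.sum_multiset_map_count]
    simp [smul_eq_mul]
  have hSfin : S = ∑ a ∈ E.toFinset, E.count a := by
    rw [hS, ← Multiset.toFinset_sum_count_eq]
  have hcount_pos : ∀ a ∈ E.toFinset, 1 ≤ E.count a := by
    intro a ha
    exact Multiset.one_le_count_iff_mem.2 (Multiset.mem_toFinset.1 ha)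
  have hTS : S ≤ T := by
    rw [hTfin, hSfin]
    exact Finset.sum_le_sum fun a ha => Nat.le_mul_of_pos_left _ (hcount_pos a ha)
  -- arithmetic: S + 1 = n and T = S
  have h3 : n * S ≤ n * T := Nat.mul_le_mul_left n hTS
  have h4 : S * S + S ≤ S * n := by
    calc S * S + S = S * (S + 1) := by ring
      _ ≤ S * n := Nat.mul_le_mul_left S hSle
  have h5 : n * T = n * S := by
    refine Nat.le_antisymm ?_ h3
    calc n * T = S * S + S := hkeyN
      _ ≤ S * n := h4
      _ = n * S := Nat.mul_comm S n
  have hTeqS : T = S := Nat.eq_of_mul_eq_mul_left hn h5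
  have hSn : S + 1 = n := by
    have h6 : S * (S + 1) = S * n := by
      calc S * (S + 1) = S * S + S := by ring
        _ = n * T := hkeyN.symm
        _ = n * S := h5
        _ = S * n := Nat.mul_comm n S
    exact Nat.eq_of_mul_eq_mul_left hS1 h6
  -- all counts equal 1
  have hone : ∀ a ∈ E.toFinset, E.count a = 1 := by
    have heq : ∑ a ∈ E.toFinset, E.count a = ∑ a ∈ E.toFinset, E.count a * E.count a := by
      rw [← hSfin, ← hTfin, hTeqS]
    have hle : ∀ a ∈ E.toFinset, E.count a ≤ E.count a * E.count a :=
      fun a ha => Nat.le_mul_of_pos_left _ (hcount_pos a ha)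
    have := (Finset.sum_eq_sum_iff_of_le hle).1 heq
    intro a ha
    have h7 := this a ha
    have h8 := hcount_pos a ha
    have h9 : E.count a * 1 = E.count a * E.count a := by rw [mul_one]; exact h7
    exact (Nat.eq_of_mul_eq_mul_left h8 h9).symm
  -- conclude
  have hle : E ≤ (Finset.univ : Finset (ZMod n)).val.erase 0 := by
    rw [Multiset.le_iff_count]
    intro a
    by_cases ha : a = 0
    · subst ha
      simp [Multiset.count_eq_zero.2 h0]
    · rw [Multiset.count_erase_of_ne ha]
      have huniv : Multiset.count a (Finset.univ : Finset (ZMod n)).val = 1 :=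
        Multiset.count_eq_one_of_mem Finset.univ.nodup (Finset.mem_univ a)
      rw [huniv]
      by_cases haE : a ∈ E
      · exact le_of_eq (hone a (Multiset.mem_toFinset.2 haE))
      · simp [Multiset.count_eq_zero.2 haE]
  refine Multiset.eq_of_le_of_card_le hle ?_
  have hcard : Multiset.card ((Finset.univ : Finset (ZMod n)).val.erase 0) = n - 1 := by
    rw [Multiset.card_erase_of_mem (Finset.mem_univ 0)]
    simp [Finset.card_univ, ZMod.card]
  rw [hcard, ← hS]
  omega
end

section
/- Let D_n = ⟨x, τ | x^n = 1, τ² = 1, τx = x^{-1}τ⟩ be the dihedral group and X, Y ⊆ C_n = ⟨x⟩. The Cayley graph Cay(D_n, X ∪ Yτ) is a directed strongly regular graph with parameters (2n, |X|+|Y|, μ, λ, t) if and only if, in the group ring Z[C_n]: (i) Ȳ·(X̄ + X^{(−1)}‾) = (λ−μ)Ȳ + μ·C̄_n, and (ii) X̄² + Ȳ·Y^{(−1)}‾ = (t−μ)e + (λ−μ)X̄ + μ·C̄_n. -/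
open scoped Classical

/-- The connection set `X ∪ Yτ ⊆ D_n`, with `C_n` realized additively as `ZMod n`,
`x^a` as `DihedralGroup.r a` and `τ = DihedralGroup.sr 0`. -/
noncomputable def dihSet (n : ℕ) (X Y : Finset (ZMod n)) : Finset (DihedralGroup n) :=
  X.image DihedralGroup.r ∪ Y.image (fun a => DihedralGroup.r a * DihedralGroup.sr 0)

/-- `X̄`, the sum of the elements of `X` in the group ring `ℤ[C_n]`. -/
noncomputable def fbar {n : ℕ} (X : Finset (ZMod n)) : AddMonoidAlgebra ℤ (ZMod n) :=
  ∑ a ∈ X, AddMonoidAlgebra.single a 1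

/-- `X^{(−1)}‾`, the sum of the inverses of the elements of `X` in `ℤ[C_n]`. -/
noncomputable def fbarInv {n : ℕ} (X : Finset (ZMod n)) : AddMonoidAlgebra ℤ (ZMod n) :=
  ∑ a ∈ X, AddMonoidAlgebra.single (-a) 1

/-- `C̄_n`, the sum of all elements of `C_n` in `ℤ[C_n]`. -/
noncomputable def cbar (n : ℕ) [NeZero n] : AddMonoidAlgebra ℤ (ZMod n) :=
  ∑ a : ZMod n, AddMonoidAlgebra.single a 1

/-!
Embed `ℤ[C_n]` in `ℤ[D_n]` by `x^a ↦ r a` (`rotAlg`). Every element of `ℤ[D_n]` is uniquely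
`A + Bτ` with `A, B ∈ ℤ[C_n]`, and `τA = A^{(−1)}τ` for `A = X̄`. Hence `S̄ = X̄ + Ȳτ` has
`S̄² = (X̄² + ȲY^{(−1)}‾) + Ȳ(X̄ + X^{(−1)}‾)τ`, while `Ḡ = C̄_n + C̄_nτ`, so the DSRG identity
`S̄² = te + λS̄ + μ(Ḡ − e − S̄)` in `ℤ[D_n]` splits into its two components (ii) and (i).
That identity is equivalent to the matrix conditions because `F ↦ (F(g⁻¹h))_{g,h}` is an injective
ring homomorphism `ℤ[G] → Mat_G(ℤ)` sending `S̄` to the adjacency matrix of `Cay(G, S)`, `Ḡ` to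
the all-ones matrix, and `Ḡ S̄ = S̄ Ḡ = |S| Ḡ` gives regularity.
-/

open Finset

section Cayley

variable {G : Type*}

noncomputable def groupRingSum (S : Finset G) : MonoidAlgebra ℤ G :=
  ∑ s ∈ S, MonoidAlgebra.single s 1

theorem coeff_groupRingSum [DecidableEq G] (S : Finset G) (g : G) :
    (groupRingSum S).coeff g = if g ∈ S then 1 else 0 := by
  simp [groupRingSum, MonoidAlgebra.coeff_sum, Finsupp.single_apply]

variable [Group G] [Fintype G]

theorem groupRingSum_univ_mul_single (g : G) :
    groupRingSum (univ : Finset G) * MonoidAlgebra.single g 1 = groupRingSum univ := by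
  ext h
  simp [coeff_groupRingSum]

theorem single_mul_groupRingSum_univ (g : G) :
    MonoidAlgebra.single g 1 * groupRingSum (univ : Finset G) = groupRingSum univ := by
  ext h
  simp [coeff_groupRingSum]

theorem groupRingSum_univ_mul (S : Finset G) :
    groupRingSum univ * groupRingSum S = (#S : ℤ) • groupRingSum univ := by
  nth_rewrite 2 [groupRingSum]
  simp only [Finset.mul_sum, groupRingSum_univ_mul_single, sum_const, natCast_zsmul]

theorem groupRingSum_mul_univ (S : Finset G) :
    groupRingSum S * groupRingSum univ = (#S : ℤ) • groupRingSum univ := by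
  nth_rewrite 1 [groupRingSum]
  simp only [Finset.sum_mul, single_mul_groupRingSum_univ, sum_const, natCast_zsmul]

variable [DecidableEq G]

noncomputable def regularMatrix : MonoidAlgebra ℤ G →+* Matrix G G ℤ where
  toFun F := Matrix.of fun g h => F.coeff (g⁻¹ * h)
  map_one' := by
    ext g h
    simp [MonoidAlgebra.one_def, Finsupp.single_apply, Matrix.one_apply, eq_inv_mul_iff_mul_eq]
  map_mul' F F' := by
    ext g h
    simp only [Matrix.mul_apply, Matrix.of_apply]
    rw [MonoidAlgebra.coeff_mul_apply_left, Finsupp.sum_fintype _ _ (by simp),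
      ← Equiv.sum_comp (Equiv.mulLeft g⁻¹)]
    simp [mul_assoc]
  map_zero' := by ext; simp
  map_add' F F' := by ext; simp

theorem regularMatrix_apply (F : MonoidAlgebra ℤ G) (g h : G) :
    regularMatrix F g h = F.coeff (g⁻¹ * h) := rfl

theorem regularMatrix_injective : Function.Injective (regularMatrix : MonoidAlgebra ℤ G → _) := by
  intro F F' h
  ext g
  simpa [regularMatrix_apply] using congr_fun₂ h 1 g

theorem regularMatrix_groupRingSum (S : Finset G) :
    regularMatrix (groupRingSum S) = adjMat (cayleyRel S) := by
  ext g h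
  simp only [regularMatrix_apply, coeff_groupRingSum, adjMat, cayleyRel, Matrix.of_apply]
  congr

theorem regularMatrix_groupRingSum_univ :
    regularMatrix (groupRingSum (univ : Finset G)) = allOnes G := by
  ext g h
  simp [regularMatrix_apply, coeff_groupRingSum, allOnes]

theorem isDSRG_cayleyRel_iff {S : Finset G} (hS : 1 ∉ S) (μ lam t : ℤ) :
    IsDSRG (cayleyRel S) (Fintype.card G) (#S) μ lam t ↔
      groupRingSum S * groupRingSum S =
        t • 1 + lam • groupRingSum S + μ • (groupRingSum univ - 1 - groupRingSum S) := by
  simp only [IsDSRG, ← regularMatrix_groupRingSum, ← regularMatrix_groupRingSum_univ, ← map_mul,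
    groupRingSum_univ_mul, groupRingSum_mul_univ, ← map_one regularMatrix, ← map_zsmul, ← map_sub,
    ← map_add, regularMatrix_injective.eq_iff]
  simp [cayleyRel, hS]

end Cayley

namespace DihedralGroup

variable {n : ℕ}

@[simps]
def rHom : Multiplicative (ZMod n) →* DihedralGroup n where
  toFun a := r a.toAdd
  map_one' := rfl
  map_mul' _ _ := (r_mul_r _ _).symm

variable (n) in
noncomputable def rotAlg : AddMonoidAlgebra ℤ (ZMod n) →+* MonoidAlgebra ℤ (DihedralGroup n) :=
  (MonoidAlgebra.mapDomainRingHom ℤ rHom).comp (AddMonoidAlgebra.toMultiplicative ℤ (ZMod n))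

variable (n) in
noncomputable def reflAlg : MonoidAlgebra ℤ (DihedralGroup n) := MonoidAlgebra.single (sr 0) 1

theorem rotAlg_single (a : ZMod n) (k : ℤ) :
    rotAlg n (AddMonoidAlgebra.single a k) = MonoidAlgebra.single (r a) k := by
  simp [rotAlg]

theorem coeff_rotAlg_r (F : AddMonoidAlgebra ℤ (ZMod n)) (c : ZMod n) :
    (rotAlg n F).coeff (r c) = F.coeff c := by
  induction F using AddMonoidAlgebra.induction_linear with
  | zero => simp
  | add F F' hF hF' => simp [hF, hF']
  | single a k => simp [rotAlg_single, Finsupp.single_apply]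

theorem coeff_rotAlg_sr (F : AddMonoidAlgebra ℤ (ZMod n)) (c : ZMod n) :
    (rotAlg n F).coeff (sr c) = 0 := by
  induction F using AddMonoidAlgebra.induction_linear with
  | zero => simp
  | add F F' hF hF' => simp [hF, hF']
  | single a k => simp [rotAlg_single]

theorem coeff_rotAlg_mul_reflAlg_r (F : AddMonoidAlgebra ℤ (ZMod n)) (c : ZMod n) :
    (rotAlg n F * reflAlg n).coeff (r c) = 0 := by
  simp [reflAlg, coeff_rotAlg_sr]

theorem coeff_rotAlg_mul_reflAlg_sr (F : AddMonoidAlgebra ℤ (ZMod n)) (c : ZMod n) :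
    (rotAlg n F * reflAlg n).coeff (sr c) = F.coeff (-c) := by
  simp [reflAlg, coeff_rotAlg_r]

theorem rotAlg_add_rotAlg_mul_reflAlg_inj {a b a' b' : AddMonoidAlgebra ℤ (ZMod n)} :
    rotAlg n a + rotAlg n b * reflAlg n = rotAlg n a' + rotAlg n b' * reflAlg n ↔
      a = a' ∧ b = b' := by
  refine ⟨fun h => ⟨?_, ?_⟩, by rintro ⟨rfl, rfl⟩; rfl⟩ <;> ext c
  · simpa [coeff_rotAlg_r, coeff_rotAlg_sr, coeff_rotAlg_mul_reflAlg_r] using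
      congr(($h).coeff (r c))
  · simpa [coeff_rotAlg_sr, coeff_rotAlg_mul_reflAlg_sr] using congr(($h).coeff (sr (-c)))

theorem reflAlg_mul_reflAlg : reflAlg n * reflAlg n = 1 := by
  simp [reflAlg, MonoidAlgebra.one_def]

theorem reflAlg_mul_rotAlg_fbar (X : Finset (ZMod n)) :
    reflAlg n * rotAlg n (fbar X) = rotAlg n (fbarInv X) * reflAlg n := by
  simp [fbar, fbarInv, reflAlg, map_sum, Finset.mul_sum, Finset.sum_mul, rotAlg_single]

end DihedralGroup

section DihSet

open DihedralGroup

variable {n : ℕ}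

theorem disjoint_image_r_image_r_mul_sr (X Y : Finset (ZMod n)) :
    Disjoint (X.image r) (Y.image fun b => r b * sr 0) := by
  simp [disjoint_left]

theorem groupRingSum_dihSet (X Y : Finset (ZMod n)) :
    groupRingSum (dihSet n X Y) = rotAlg n (fbar X) + rotAlg n (fbar Y) * reflAlg n := by
  rw [groupRingSum, dihSet, sum_union (disjoint_image_r_image_r_mul_sr X Y),
    sum_image fun _ _ _ _ => r.inj, sum_image fun _ _ _ _ h => r.inj (mul_right_cancel h)]
  simp [fbar, map_sum, sum_mul, rotAlg_single, reflAlg]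

theorem dihSet_univ_univ [NeZero n] : dihSet n univ univ = univ := by
  refine eq_univ_of_forall fun g => ?_
  cases g with
  | r a => simp [dihSet]
  | sr a => simpa [dihSet] using ⟨-a, neg_neg a⟩

theorem one_mem_dihSet_iff {X Y : Finset (ZMod n)} : 1 ∈ dihSet n X Y ↔ 0 ∈ X := by
  rw [← r_zero]
  simp [dihSet, -r_zero]

theorem card_dihSet (X Y : Finset (ZMod n)) : #(dihSet n X Y) = #X + #Y := by
  rw [dihSet, card_union_of_disjoint (disjoint_image_r_image_r_mul_sr X Y),
    card_image_of_injective _ fun _ _ => r.inj,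
    card_image_of_injective _ fun _ _ h => r.inj (mul_right_cancel h)]

theorem groupRingSum_dihSet_mul_self (X Y : Finset (ZMod n)) :
    groupRingSum (dihSet n X Y) * groupRingSum (dihSet n X Y) =
      rotAlg n (fbar X * fbar X + fbar Y * fbarInv Y) +
        rotAlg n (fbar Y * (fbar X + fbarInv X)) * reflAlg n := by
  have hswap (Z : Finset (ZMod n)) : rotAlg n (fbar Y) * reflAlg n * rotAlg n (fbar Z) =
      rotAlg n (fbar Y * fbarInv Z) * reflAlg n := by
    rw [mul_assoc, reflAlg_mul_rotAlg_fbar, ← mul_assoc, map_mul]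
  have hYY : rotAlg n (fbar Y) * reflAlg n * (rotAlg n (fbar Y) * reflAlg n) =
      rotAlg n (fbar Y * fbarInv Y) := by
    rw [← mul_assoc, hswap, mul_assoc, reflAlg_mul_reflAlg, mul_one]
  have hXY : rotAlg n (fbar X) * rotAlg n (fbar Y) = rotAlg n (fbar Y) * rotAlg n (fbar X) :=
    ((Commute.all _ _).map _).eq
  rw [groupRingSum_dihSet, add_mul, mul_add, mul_add, hswap, hYY, ← mul_assoc, hXY]
  simp only [map_add, map_mul, add_mul, mul_add]
  abel

theorem dsrg_combination_dihSet [NeZero n] (X Y : Finset (ZMod n)) (μ lam t : ℤ) :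
    t • 1 + lam • groupRingSum (dihSet n X Y) +
        μ • (groupRingSum univ - 1 - groupRingSum (dihSet n X Y)) =
      rotAlg n ((t - μ) • 1 + (lam - μ) • fbar X + μ • cbar n) +
        rotAlg n ((lam - μ) • fbar Y + μ • cbar n) * reflAlg n := by
  rw [← dihSet_univ_univ, groupRingSum_dihSet, groupRingSum_dihSet]
  simp only [map_add, map_zsmul, map_one, add_mul, smul_mul_assoc]
  rw [show fbar univ = cbar n from rfl]
  module

end DihSet

/-- `Cay(D_n, X ∪ Yτ)` is a DSRG with parameters `(2n, |X|+|Y|, μ, λ, t)`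
iff in `ℤ[C_n]`: (i) `Ȳ(X̄ + X^{(−1)}‾) = (λ−μ)Ȳ + μC̄_n` and
(ii) `X̄² + ȲY^{(−1)}‾ = (t−μ)e + (λ−μ)X̄ + μC̄_n`. -/
theorem dihedrant_isDSRG_iff (n : ℕ) [NeZero n] (X Y : Finset (ZMod n))
    (h0 : (0 : ZMod n) ∉ X) (μ lam t : ℤ) :
    IsDSRG (cayleyRel (dihSet n X Y)) (2 * (n : ℤ)) ((X.card : ℤ) + (Y.card : ℤ)) μ lam t ↔
      (fbar Y * (fbar X + fbarInv X) = (lam - μ) • fbar Y + μ • cbar n ∧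
       fbar X * fbar X + fbar Y * fbarInv Y =
         (t - μ) • (1 : AddMonoidAlgebra ℤ (ZMod n)) + (lam - μ) • fbar X + μ • cbar n) := by
  have hcard : 2 * (n : ℤ) = Fintype.card (DihedralGroup n) := by simp [DihedralGroup.card]
  have hdeg : (X.card : ℤ) + Y.card = #(dihSet n X Y) := by simp [card_dihSet]
  rw [hcard, hdeg, isDSRG_cayleyRel_iff (one_mem_dihSet_iff.not.mpr h0),
    groupRingSum_dihSet_mul_self, dsrg_combination_dihSet,
    DihedralGroup.rotAlg_add_rotAlg_mul_reflAlg_inj, and_comm]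
end

section
/- Let 2v be an even positive divisor of n with v ≥ 2, T ⊆ {x, x², ..., x^{2v−1}}, and X = T·⟨x^{2v}⟩ ⊆ C_n such that the multiset X ⊎ X^{(−1)} equals (C_n \ ⟨x^{2v}⟩) ⊎ x^v⟨x^{2v}⟩ and X ∪ x^v·X = C_n. Then Dih(n,X,X) is a directed strongly regular graph with parameters (2n, n, n/2 + l', n/2 − l', n/2 + l'), where l' = n/(2v). -/
open scoped Classical

/-!
Write `S = X ∪ Xτ` and `A = X̄ (X̄ + X̄^{(−1)})` in `ℤ[C_n]`. Since `τ x τ = x⁻¹`, one gets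
`S̄² = A + Aτ` in `ℤ[D_n]`, so `Cay(D_n, S)` is a DSRG as soon as the coefficient of `c`
in `A` is `λ` for `c ∈ X` and `μ` for `c ∉ X`. The hypotheses give
`X̄ + X̄^{(−1)} = C̄_n − H̄ + x^v H̄`, `X̄ H̄ = l' X̄` (X is a union of `H`-cosets) and
`x^v X̄ = C̄_n − X̄` (the cover is disjoint, as `2|X| = n`), whence
`A = (|X| + l') C̄_n − 2l' X̄` with `|X| = n/2`.
-/

open Finset

section Abelian

variable {G : Type*} [AddCommGroup G] [DecidableEq G]

/-- The coefficient of `c` in `X̄ (X̄ + X̄^{(−1)})`. -/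
def sumDiffReps (X : Finset G) (c : G) : ℕ :=
  #{a ∈ X | c - a ∈ X} + #{a ∈ X | a - c ∈ X}

theorem card_filter_sub_mem_eq_card [Fintype G] (X : Finset G) (c : G) :
    #{a | c - a ∈ X} = #X := by
  have : ({a | c - a ∈ X} : Finset G) = X.image (c - ·) := by
    ext a
    simp only [mem_filter, mem_univ, true_and, mem_image]
    exact ⟨fun h => ⟨c - a, h, sub_sub_cancel c a⟩, by rintro ⟨b, hb, rfl⟩; simpa using hb⟩
  rw [this, card_image_of_injective _ sub_right_injective]

theorem card_filter_add_mem_eq_card_filter_sub_mem (X : Finset G) (c : G) :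
    #{a ∈ X | c + a ∈ X} = #{a ∈ X | a - c ∈ X} := by
  refine card_bij (fun a _ => c + a) (fun a ha => ?_) (fun _ _ _ _ => add_left_cancel)
    (fun b hb => ⟨b - c, ?_, add_sub_cancel c b⟩)
  · simp only [mem_filter] at ha ⊢
    exact ⟨ha.2, by simpa using ha.1⟩
  · simp only [mem_filter] at hb ⊢
    exact ⟨hb.2, by simpa using hb.1⟩

theorem card_filter_sub_mem_of_periodic {X H : Finset G}
    (hper : ∀ a ∈ X, ∀ h ∈ H, a + h ∈ X) (hneg : ∀ h ∈ H, -h ∈ H) (c : G) :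
    #{h ∈ H | c - h ∈ X} = if c ∈ X then #H else 0 := by
  split_ifs with hc
  · rw [filter_true_of_mem fun h hh => by simpa [sub_eq_add_neg] using hper c hc _ (hneg h hh)]
  · rw [filter_false_of_mem fun h hh hch => hc (by simpa using hper _ hch h hh), card_empty]

theorem two_mul_card_eq_card_of_multiset_eq [Fintype G] {X H : Finset G} {g : G}
    (hmul : X.val + X.val.map (fun a => -a) = (univ \ H).val + H.val.map (fun a => g + a)) :
    2 * #X = Fintype.card G := by
  have := congrArg Multiset.card hmul
  simp only [Multiset.card_add, Multiset.card_map, card_val] at this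
  rw [card_sdiff_add_card_eq_card (subset_univ H), card_univ] at this
  omega

theorem sub_mem_iff_notMem_of_cover [Fintype G] {X : Finset G} {g : G}
    (hcard : 2 * #X = Fintype.card G) (hcover : X ∪ X.image (g + ·) = univ) (c : G) :
    c - g ∈ X ↔ c ∉ X := by
  have hdisj : Disjoint X (X.image (g + ·)) := by
    rw [← card_union_eq_card_add_card, hcover, card_univ,
      card_image_of_injective _ (add_right_injective g)]
    omega
  constructor
  · intro h hc
    exact disjoint_left.mp hdisj hc (mem_image.mpr ⟨c - g, h, add_sub_cancel g c⟩)
  · intro hc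
    obtain h | h := mem_union.mp (hcover ▸ mem_univ c : c ∈ X ∪ X.image (g + ·))
    · exact absurd h hc
    · obtain ⟨a, ha, rfl⟩ := mem_image.mp h
      simpa using ha

theorem sumDiffReps_eq [Fintype G] {X H : Finset G} {g : G}
    (hper : ∀ a ∈ X, ∀ h ∈ H, a + h ∈ X) (hneg : ∀ h ∈ H, -h ∈ H)
    (hmul : X.val + X.val.map (fun a => -a) = (univ \ H).val + H.val.map (fun a => g + a))
    (hcover : X ∪ X.image (g + ·) = univ) (c : G) :
    (sumDiffReps X c : ℤ) = if c ∈ X then (#X : ℤ) - #H else (#X : ℤ) + #H := by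
  have hcard := two_mul_card_eq_card_of_multiset_eq hmul
  have key := congrArg (Multiset.countP (fun m => c - m ∈ X)) hmul
  rw [Multiset.countP_add, Multiset.countP_add, Multiset.countP_map, Multiset.countP_map] at key
  simp only [Multiset.countP_eq_card_filter, ← filter_val, card_val, sub_neg_eq_add,
    sub_add_eq_sub_sub] at key
  have hsplit : #{m ∈ univ \ H | c - m ∈ X} + #{m ∈ H | c - m ∈ X} = #X := by
    rw [← card_union_of_disjoint (disjoint_filter_filter sdiff_disjoint), ← filter_union,
      sdiff_union_of_subset (subset_univ H), card_filter_sub_mem_eq_card]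
  have hX := card_filter_sub_mem_of_periodic hper hneg c
  have hXg := card_filter_sub_mem_of_periodic hper hneg (c - g)
  rw [sumDiffReps, ← card_filter_add_mem_eq_card_filter_sub_mem]
  have hcg := sub_mem_iff_notMem_of_cover hcard hcover c
  by_cases hc : c ∈ X
  · rw [if_pos hc] at hX ⊢
    rw [if_neg fun h => hcg.mp h hc] at hXg
    omega
  · rw [if_neg hc] at hX ⊢
    rw [if_pos (hcg.mpr hc)] at hXg
    omega

end Abelian

section Cayley

variable {G : Type*} [Group G] [Fintype G] [DecidableEq G]

theorem adjMat_cayleyRel_apply (S : Finset G) (i j : G) :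
    adjMat (cayleyRel S) i j = if i⁻¹ * j ∈ S then 1 else 0 := by
  simp only [adjMat, cayleyRel, Matrix.of_apply]
  congr

theorem card_filter_inv_mul_mem_left (S : Finset G) (i : G) : #{k | i⁻¹ * k ∈ S} = #S :=
  card_nbij' (i⁻¹ * ·) (i * ·) (by intro k; simp) (by intro k; simp) (by intro k; simp)
    (by intro k; simp)

theorem card_filter_inv_mul_mem_right (S : Finset G) (j : G) : #{k | k⁻¹ * j ∈ S} = #S :=
  card_nbij' (·⁻¹ * j) (j * ·⁻¹) (by intro k; simp) (by intro k; simp [mul_assoc])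
    (by intro k; simp) (by intro k; simp [mul_assoc])

theorem card_filter_inv_mul_mem_and (S : Finset G) (i j : G) :
    #{k | i⁻¹ * k ∈ S ∧ k⁻¹ * j ∈ S} = #{u ∈ S | u⁻¹ * (i⁻¹ * j) ∈ S} :=
  card_nbij' (i⁻¹ * ·) (i * ·) (by intro k; simp [mul_assoc]) (by intro k; simp [mul_assoc])
    (by intro k; simp) (by intro k; simp)

theorem isDSRG_cayleyRel {S : Finset G} (h1 : 1 ∉ S) {lam μ : ℤ}
    (hcount : ∀ d, (#{u ∈ S | u⁻¹ * d ∈ S} : ℤ) = if d ∈ S then lam else μ) :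
    IsDSRG (cayleyRel S) (Fintype.card G) #S μ lam μ := by
  refine ⟨fun i hi => h1 (by simpa [cayleyRel] using hi), rfl, ?_, ?_, ?_⟩ <;> ext i j
  · simp [Matrix.mul_apply, allOnes, adjMat_cayleyRel_apply, sum_boole,
      card_filter_inv_mul_mem_right]
  · simp [Matrix.mul_apply, allOnes, adjMat_cayleyRel_apply, sum_boole,
      card_filter_inv_mul_mem_left]
  · simp only [Matrix.mul_apply, adjMat_cayleyRel_apply, ite_mul, one_mul, zero_mul, ← ite_and]
    rw [sum_boole, card_filter_inv_mul_mem_and, hcount]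
    simp only [Matrix.add_apply, Matrix.sub_apply, Matrix.smul_apply, Matrix.one_apply, allOnes,
      Matrix.of_apply, adjMat_cayleyRel_apply, smul_eq_mul]
    by_cases hij : i = j
    · subst hij
      simp [h1]
    · split_ifs <;> simp_all

end Cayley

section Dihedral

open DihedralGroup

variable {n : ℕ}

theorem dihSet_eq (X Y : Finset (ZMod n)) :
    dihSet n X Y = X.image r ∪ Y.image (fun a => sr (-a)) := by
  simp [dihSet]

theorem r_mem_dihSet {X Y : Finset (ZMod n)} {z : ZMod n} : r z ∈ dihSet n X Y ↔ z ∈ X := by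
  simp [dihSet_eq]

theorem sr_mem_dihSet {X Y : Finset (ZMod n)} {z : ZMod n} : sr z ∈ dihSet n X Y ↔ -z ∈ Y := by
  simp [dihSet_eq, neg_eq_iff_eq_neg]

theorem card_filter_dihSet (X Y : Finset (ZMod n)) (p : DihedralGroup n → Prop)
    [DecidablePred p] :
    #{u ∈ dihSet n X Y | p u} = #{a ∈ X | p (r a)} + #{a ∈ Y | p (sr (-a))} := by
  have hdisj : Disjoint (X.image r) (Y.image fun a => sr (-a)) := by
    simp [disjoint_left]
  rw [dihSet_eq, filter_union, card_union_of_disjoint (disjoint_filter_filter hdisj),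
    filter_image, filter_image, card_image_of_injective _ fun _ _ => r.inj,
    card_image_of_injective _ fun _ _ h => neg_inj.mp (sr.inj h)]

theorem card_filter_dihSet_r (X : Finset (ZMod n)) (c : ZMod n) :
    #{u ∈ dihSet n X X | u⁻¹ * r c ∈ dihSet n X X} = sumDiffReps X c := by
  simp [card_filter_dihSet, r_mem_dihSet, sr_mem_dihSet, sumDiffReps, neg_add_eq_sub]

theorem card_filter_dihSet_sr (X : Finset (ZMod n)) (c : ZMod n) :
    #{u ∈ dihSet n X X | u⁻¹ * sr c ∈ dihSet n X X} = sumDiffReps X (-c) := by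
  simp [card_filter_dihSet, r_mem_dihSet, sr_mem_dihSet, sumDiffReps, neg_add_eq_sub,
    add_comm _ c]

theorem card_filter_dihSet_eq_ite {X : Finset (ZMod n)} {lam μ : ℤ}
    (h : ∀ c, (sumDiffReps X c : ℤ) = if c ∈ X then lam else μ) (d : DihedralGroup n) :
    (#{u ∈ dihSet n X X | u⁻¹ * d ∈ dihSet n X X} : ℤ) = if d ∈ dihSet n X X then lam else μ := by
  cases d with
  | r c => simp only [card_filter_dihSet_r, r_mem_dihSet, h]
  | sr c => simp only [card_filter_dihSet_sr, sr_mem_dihSet, h]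

end Dihedral

section Progressions

variable {n l m : ℕ}

/-- `{x^{jm} : j < l}`, which is the subgroup `⟨x^m⟩` of `C_n` when `l * m = n`. -/
def zmodMultiples (n l m : ℕ) : Finset (ZMod n) :=
  (range l).image fun j : ℕ => ((j * m : ℕ) : ZMod n)

/-- `T·⟨x^m⟩`, written through the representatives `t + jm` with `j < l`. -/
def zmodTranslates (n l m : ℕ) (T : Finset ℕ) : Finset (ZMod n) :=
  (T ×ˢ range l).image fun p : ℕ × ℕ => ((p.1 + p.2 * m : ℕ) : ZMod n)

theorem natCast_mod_mul (hlm : l * m = n) (k : ℕ) :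
    ((k % l * m : ℕ) : ZMod n) = ((k * m : ℕ) : ZMod n) := by
  rw [ZMod.natCast_eq_natCast_iff', ← hlm, Nat.mul_mod_mul_right, Nat.mul_mod_mul_right,
    Nat.mod_mod]

theorem pos_left_of_mul_eq [NeZero n] (hlm : l * m = n) : 0 < l :=
  Nat.pos_of_ne_zero (left_ne_zero_of_mul (hlm ▸ NeZero.ne n))

theorem natCast_mul_mem_zmodMultiples [NeZero n] (hlm : l * m = n) (k : ℕ) :
    ((k * m : ℕ) : ZMod n) ∈ zmodMultiples n l m :=
  mem_image.mpr
    ⟨k % l, mem_range.mpr (Nat.mod_lt k (pos_left_of_mul_eq hlm)), natCast_mod_mul hlm k⟩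

theorem neg_mem_zmodMultiples [NeZero n] (hlm : l * m = n) {h : ZMod n}
    (hh : h ∈ zmodMultiples n l m) : -h ∈ zmodMultiples n l m := by
  obtain ⟨j, hj, rfl⟩ := mem_image.mp hh
  have hsum : ((j * m : ℕ) : ZMod n) + (((l - j) * m : ℕ) : ZMod n) = 0 := by
    rw [← Nat.cast_add, ← add_mul, Nat.add_sub_cancel' (mem_range.mp hj).le, hlm,
      ZMod.natCast_self]
  rw [neg_eq_of_add_eq_zero_right hsum]
  exact natCast_mul_mem_zmodMultiples hlm _

theorem card_zmodMultiples [NeZero n] (hlm : l * m = n) : #(zmodMultiples n l m) = l := by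
  have hm := Nat.pos_of_ne_zero (right_ne_zero_of_mul (hlm ▸ NeZero.ne n))
  have hlt : ∀ k ∈ (range l : Set ℕ), k * m < n := fun k hk =>
    hlm ▸ Nat.mul_lt_mul_of_pos_right (by simpa using hk) hm
  refine (card_image_of_injOn fun i hi j hj hij => ?_).trans (card_range l)
  rw [ZMod.natCast_eq_natCast_iff', Nat.mod_eq_of_lt (hlt i hi), Nat.mod_eq_of_lt (hlt j hj)]
    at hij
  exact Nat.eq_of_mul_eq_mul_right hm hij

theorem add_mem_zmodTranslates [NeZero n] (hlm : l * m = n) {T : Finset ℕ} {a h : ZMod n}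
    (ha : a ∈ zmodTranslates n l m T) (hh : h ∈ zmodMultiples n l m) :
    a + h ∈ zmodTranslates n l m T := by
  obtain ⟨⟨t, k⟩, htk, rfl⟩ := mem_image.mp ha
  obtain ⟨j, -, rfl⟩ := mem_image.mp hh
  refine mem_image.mpr ⟨(t, (k + j) % l), mem_product.mpr ⟨(mem_product.mp htk).1,
    mem_range.mpr (Nat.mod_lt _ (pos_left_of_mul_eq hlm))⟩, ?_⟩
  simp only [Nat.cast_add, natCast_mod_mul hlm]
  push_cast
  ring

theorem zero_notMem_zmodTranslates (hlm : l * m = n) {T : Finset ℕ} (hT : ∀ t ∈ T, ¬ m ∣ t) :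
    0 ∉ zmodTranslates n l m T := by
  simp only [zmodTranslates, mem_image, mem_product, Prod.exists, ZMod.natCast_eq_zero_iff,
    not_exists, not_and]
  intro t k ht hdvd
  exact hT t ht.1 ((Nat.dvd_add_left (dvd_mul_left m k)).mp ((Dvd.intro_left l hlm).trans hdvd))

end Progressions

theorem construction_even_general (n v : ℕ) [NeZero n] (hv : 2 * v ∣ n)
    (T : Finset ℕ) (hT : ∀ a ∈ T, 1 ≤ a ∧ a < 2 * v)
    (H : Finset (ZMod n))
    (hH : H = (Finset.range (n / (2 * v))).image (fun j : ℕ => ((j * (2 * v) : ℕ) : ZMod n)))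
    (X : Finset (ZMod n))
    (hX : X = (T ×ˢ Finset.range (n / (2 * v))).image
      (fun p : ℕ × ℕ => ((p.1 + p.2 * (2 * v) : ℕ) : ZMod n)))
    (hmul : X.val + X.val.map (fun a => -a) =
      (Finset.univ \ H).val + H.val.map (fun a => (v : ZMod n) + a))
    (hcover : X ∪ X.image (fun a => (v : ZMod n) + a) = Finset.univ) :
    IsDSRG (cayleyRel (dihSet n X X)) (2 * (n : ℤ)) (n : ℤ)
      ((n : ℤ) / 2 + (n / (2 * v) : ℕ))
      ((n : ℤ) / 2 - (n / (2 * v) : ℕ))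
      ((n : ℤ) / 2 + (n / (2 * v) : ℕ)) := by
  have hlm : n / (2 * v) * (2 * v) = n := Nat.div_mul_cancel hv
  have hper : ∀ a ∈ X, ∀ h ∈ H, a + h ∈ X := by
    subst hX hH
    exact fun a ha h hh => add_mem_zmodTranslates hlm ha hh
  have hneg : ∀ h ∈ H, -h ∈ H := by
    subst hH
    exact fun h hh => neg_mem_zmodMultiples hlm hh
  have hcardH : #H = n / (2 * v) := hH ▸ card_zmodMultiples hlm
  have hcardX : 2 * #X = n := by
    simpa using two_mul_card_eq_card_of_multiset_eq hmul
  have hreps (c : ZMod n) : (sumDiffReps X c : ℤ) =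
      if c ∈ X then (n : ℤ) / 2 - (n / (2 * v) : ℕ) else (n : ℤ) / 2 + (n / (2 * v) : ℕ) := by
    rw [sumDiffReps_eq hper hneg hmul hcover, hcardH]
    split_ifs <;> omega
  have h1 : 1 ∉ dihSet n X X := by
    rw [DihedralGroup.one_def, r_mem_dihSet, hX]
    exact zero_notMem_zmodTranslates hlm fun t ht hdvd =>
      Nat.one_le_iff_ne_zero.mp (hT t ht).1 (Nat.eq_zero_of_dvd_of_lt hdvd (hT t ht).2)
  have hdsrg := isDSRG_cayleyRel h1 (card_filter_dihSet_eq_ite hreps)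
  rw [DihedralGroup.card, card_dihSet] at hdsrg
  convert hdsrg using 2 <;> omega

/-- Construction. Let `2v` be an even positive divisor of `n` with `v ≥ 2`,
`T ⊆ {x,…,x^{2v−1}}` and `X = T·⟨x^{2v}⟩` such that the multiset `X ⊎ X^{(−1)}` equals
`(C_n \ ⟨x^{2v}⟩) ⊎ x^v⟨x^{2v}⟩` and `X ∪ x^v·X = C_n`. Then `Dih(n,X,X)` is a DSRG
with parameters `(2n, n, n/2 + l', n/2 − l', n/2 + l')` where `l' = n/(2v)`.
Here `H` is the subgroup `⟨x^{2v}⟩` of `C_n`, as a finset. -/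
theorem construction_even (n v : ℕ) [NeZero n] (hv : 2 * v ∣ n) (hv2 : 2 ≤ v)
    (T : Finset ℕ) (hT : ∀ a ∈ T, 1 ≤ a ∧ a < 2 * v)
    (H : Finset (ZMod n))
    (hH : H = (Finset.range (n / (2 * v))).image (fun j : ℕ => ((j * (2 * v) : ℕ) : ZMod n)))
    (X : Finset (ZMod n))
    (hX : X = (T ×ˢ Finset.range (n / (2 * v))).image
      (fun p : ℕ × ℕ => ((p.1 + p.2 * (2 * v) : ℕ) : ZMod n)))
    (hmul : X.val + X.val.map (fun a => -a) =
      (Finset.univ \ H).val + H.val.map (fun a => (v : ZMod n) + a))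
    (hcover : X ∪ X.image (fun a => (v : ZMod n) + a) = Finset.univ) :
    IsDSRG (cayleyRel (dihSet n X X)) (2 * (n : ℤ)) (n : ℤ)
      ((n : ℤ) / 2 + (n / (2 * v) : ℕ))
      ((n : ℤ) / 2 - (n / (2 * v) : ℕ))
      ((n : ℤ) / 2 + (n / (2 * v) : ℕ)) :=
  construction_even_general n v hv T hT H hH X hX hmul hcover
end
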